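/- arXiv:math/0103031 — 4 statements merged into one kernel-verified Lean document; each statement's English description precedes it below -/
import Mathlib

section
/- Let m ∈ ℕ and let w and v be non-empty words in 𝒜₁ and 𝒜₂ respectively. Then, modulo the ideal L^{(m)}, one has j₁^{(m)}(w) = Σ_{k=1}^{m} i_{k,m}(w) ⊗ (t_{[k,m]} − t_{[k−1,m]}) and j₂^{(m)}(v) = Σ_{k=1}^{m} (t_{[k,m]} − t_{[k−1,m]}) ⊗ i_{k,m}(v), where t_{[0,m]} = 0. (Proposition 2.2) -/
open scoped ComplexOrder TensorProduct

/-- `w` is a non-empty word in the generating set `G`. -/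
def IsWord {R : Type*} [Monoid R] (G : Set R) (w : R) : Prop :=
  ∃ l : List R, l ≠ [] ∧ (∀ x ∈ l, x ∈ G) ∧ w = l.prod

/-- `φ` is a state on the unital complex *-algebra `R`. -/
def IsState {R : Type*} [Ring R] [Algebra ℂ R] [StarRing R] (φ : R →ₗ[ℂ] ℂ) : Prop :=
  φ 1 = 1 ∧ ∀ x, 0 ≤ φ (x * star x)

/-- The ordered product `f a * f (a+1) * ⋯ * f b` (an empty product if `b < a`). -/
def ordProd {T : Type*} [Monoid T] (f : ℕ → T) (a b : ℕ) : T :=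
  ((List.range' a (b + 1 - a)).map f).prod

/-- The element `t_{[k,m]}`: `g` at the tensor sites `k, …, m` (1-based), with the
convention `t_{[0,m]} = 0`. -/
def tBlock {T : Type*} [Ring T] (g : ℕ → T) (k m : ℕ) : T :=
  if k = 0 then 0 else ordProd g k m

/-- The embedding at tensor site `k` among the sites `1, …, m`, with value `0` out of
range (the convention `i_{m+1,m}(a) = 0`). -/
def embSite {T R : Type*} [Ring T] (e : ℕ → R → T) (m k : ℕ) (x : R) : T :=
  if 1 ≤ k ∧ k ≤ m then e k x else 0

/-- `φt` is the Boolean extension of the state `φ` to the free product `S = R * ℂ[t]`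
(with canonical embedding `ι : R → S` and separator `t`):  one has `φt 1 = 1` and
`φt (t^{e₀} w₁ t^{e₁} ⋯ wₙ t^{eₙ}) = φ(w₁) ⋯ φ(wₙ)` for all non-empty words `wᵢ` in the
generating set `G` and all exponents with `e₁, …, e_{n-1} > 0`. -/
def IsBooleanExt {R S : Type*} [Ring R] [Algebra ℂ R] [Ring S] [Algebra ℂ S]
    (G : Set R) (ι : R → S) (t : S) (φ : R →ₗ[ℂ] ℂ) (φt : S →ₗ[ℂ] ℂ) : Prop :=
  φt 1 = 1 ∧
  ∀ (n : ℕ) (w : ℕ → R) (e : ℕ → ℕ),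
    (∀ i < n, IsWord G (w i)) →
    (∀ i, 0 < i → i < n → 0 < e i) →
    φt (((List.range n).map fun i => t ^ e i * ι (w i)).prod * t ^ e n) =
      ((List.range n).map fun i => φ (w i)).prod

/-!
Modulo `L^{(m)}` the separators `tₗ` become commuting idempotents, so the elements
`P k = t_{[k,m]}` form a chain (`P a * P b = P (min a b)`) and their increments
`q k = P k - P (k-1)` are orthogonal idempotents. Summation by parts rewrites `j(a)` for a
generator `a` as `Σ_k i_{k,m}(a) q k`, and this form is multiplicative because the
`i_{k,m}(a)` commute with the `q l`; hence it persists along words.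
-/

open Finset

section OrdProd

variable {M : Type*} [Monoid M] (f : ℕ → M)

lemma ordProd_eq_mul {a b : ℕ} (h : a ≤ b) : ordProd f a b = f a * ordProd f (a + 1) b := by
  rw [ordProd, ordProd, show b + 1 - a = b - a + 1 by omega, List.range'_succ,
    show b + 1 - (a + 1) = b - a by omega, List.map_cons, List.prod_cons]

lemma Commute.ordProd_right {c : M} (h : ∀ l, Commute c (f l)) (a b : ℕ) :
    Commute c (ordProd f a b) :=
  Commute.list_prod_right _ _ fun _ hx => by
    obtain ⟨l, -, rfl⟩ := List.mem_map.mp hx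
    exact h l

end OrdProd

lemma Commute.tBlock_right {R : Type*} [Ring R] {c : R} (g : ℕ → R) (h : ∀ l, Commute c (g l))
    (k m : ℕ) : Commute c (tBlock g k m) := by
  unfold tBlock
  split
  · exact Commute.zero_right c
  · exact Commute.ordProd_right g h k m

lemma map_tBlock {R S : Type*} [Ring R] [Ring S] (f : R →+* S) (g : ℕ → R) (k m : ℕ) :
    f (tBlock g k m) = tBlock (fun l => f (g l)) k m := by
  unfold tBlock ordProd
  split
  · exact map_zero f
  · rw [map_list_prod, List.map_map]
    rfl

section CommutingIdempotents

variable {R : Type*} [Ring R] {p : ℕ → R} {m : ℕ}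
  (hp : ∀ l, 1 ≤ l → l ≤ m → IsIdempotentElem (p l)) (hpc : ∀ k l, Commute (p k) (p l))
include hp hpc

lemma ordProd_mul_eq_self {a l : ℕ} (hl : 1 ≤ l) (hlm : l ≤ m) (hal : a ≤ l) :
    ordProd p a m * p l = ordProd p a m := by
  induction hal using Nat.decreasingInduction with
  | self =>
    rw [ordProd_eq_mul p hlm, mul_assoc, ← (Commute.ordProd_right p (hpc l) _ _).eq,
      ← mul_assoc, (hp l hl hlm).eq]
  | of_succ k hk ih => rw [ordProd_eq_mul p (by omega), mul_assoc, ih]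

lemma ordProd_mul_ordProd_eq_self {a b : ℕ} (hb : 1 ≤ b) (hab : a ≤ b) :
    ordProd p a m * ordProd p b m = ordProd p a m :=
  List.prod_induction (fun y => ordProd p a m * y = ordProd p a m)
    (fun y z hy hz => by rw [← mul_assoc, hy, hz]) (mul_one _) fun y hy => by
      obtain ⟨l, hl, rfl⟩ := List.mem_map.mp hy
      rw [List.mem_range'_1] at hl
      exact ordProd_mul_eq_self hp hpc (by omega) (by omega) (by omega)

lemma tBlock_mul_tBlock (a b : ℕ) : tBlock p a m * tBlock p b m = tBlock p (min a b) m := by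
  wlog hab : a ≤ b generalizing a b
  · have hc : Commute (tBlock p a m) (tBlock p b m) :=
      Commute.tBlock_right p (fun l => (Commute.tBlock_right p (fun l' => hpc l l') a m).symm) b m
    rw [hc.eq, min_comm]
    exact this b a (by omega)
  rcases Nat.eq_zero_or_pos a with rfl | ha
  · simp [tBlock]
  rw [min_eq_left hab]
  simp only [tBlock, if_neg ha.ne', if_neg (show b ≠ 0 by omega)]
  exact ordProd_mul_ordProd_eq_self hp hpc (by omega) hab

end CommutingIdempotents

lemma orthogonalIdempotents_sub_pred {R : Type*} [Ring R] {P : ℕ → R}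
    (hP : ∀ a b, P a * P b = P (min a b)) : OrthogonalIdempotents fun k => P k - P (k - 1) := by
  refine ⟨fun k => ?_, fun k l hkl => ?_⟩
  · simp only [IsIdempotentElem, sub_mul, mul_sub, hP, min_self,
      min_eq_right (Nat.sub_le k 1), min_eq_left (Nat.sub_le k 1)]
    abel
  · simp only [sub_mul, mul_sub, hP]
    rcases Nat.lt_or_gt_of_ne hkl with h | h
    · rw [min_eq_left h.le, min_eq_left (show k ≤ l - 1 by omega),
        min_eq_left (show k - 1 ≤ l by omega), min_eq_left (show k - 1 ≤ l - 1 by omega)]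
      abel
    · rw [min_eq_right h.le, min_eq_right (show l - 1 ≤ k by omega),
        min_eq_right (show l ≤ k - 1 by omega), min_eq_right (show l - 1 ≤ k - 1 by omega)]
      abel

lemma OrthogonalIdempotents.sum_mul_sum {R I : Type*} [Ring R] {q : I → R}
    (hq : OrthogonalIdempotents q) (s : Finset I) (u v : I → R)
    (hvq : ∀ k l, Commute (v k) (q l)) :
    (∑ k ∈ s, u k * q k) * (∑ l ∈ s, v l * q l) = ∑ k ∈ s, u k * v k * q k := by
  have hmove : ∀ k l, u k * q k * (v l * q l) = u k * v l * (q k * q l) := fun k l => by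
    rw [mul_assoc, ← mul_assoc (q k), ← (hvq l k).eq]
    simp only [mul_assoc]
  rw [Finset.sum_mul_sum]
  refine Finset.sum_congr rfl fun k hk => ?_
  rw [sum_eq_single k (fun l _ hlk => by rw [hmove, hq.ortho hlk.symm, mul_zero])
    (fun hk' => absurd hk hk'), hmove, (hq.idem k).eq]

lemma eq_sum_of_isWord {A R I : Type*} [Monoid A] [Ring R] {G : Set A} (J : A →* R)
    (x : I → A →* R) {q : I → R} (hq : OrthogonalIdempotents q) (s : Finset I)
    (hxq : ∀ k a l, Commute (x k a) (q l)) (hgen : ∀ a ∈ G, J a = ∑ k ∈ s, x k a * q k)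
    {w : A} (hw : IsWord G w) : J w = ∑ k ∈ s, x k w * q k := by
  obtain ⟨l, hl, hlG, rfl⟩ := hw
  refine List.prod_induction_nonempty (fun w => J w = ∑ k ∈ s, x k w * q k) (fun a b ha hb => ?_)
    hl fun a ha => hgen a (hlG a ha)
  rw [map_mul, ha, hb, hq.sum_mul_sum s _ _ fun k l => hxq k b l]
  simp only [map_mul]

lemma sum_Icc_sub_succ_mul {R : Type*} [Ring R] (F G : ℕ → R) (n : ℕ) :
    ∑ k ∈ Icc 1 n, (F k - F (k + 1)) * G k =
      ∑ k ∈ Icc 1 n, F k * (G k - G (k - 1)) - F (n + 1) * G n + F 1 * G 0 := by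
  induction n with
  | zero => simp
  | succ n ih =>
    rw [← insert_Icc_right_eq_Icc_add_one (by omega), sum_insert (by simp),
      sum_insert (by simp), ih, Nat.add_sub_cancel]
    noncomm_ring

theorem sub_sum_mem_of_isWord {A T : Type*} [Monoid A] [Ring T] {G : Set A}
    (L : TwoSidedIdeal T) (J : A →* T) (x : ℕ → A →* T) (s : ℕ → T) (m : ℕ)
    (hs : ∀ l, 1 ≤ l → l ≤ m → s l * (1 - s l) ∈ L) (hsc : ∀ k l, Commute (s k) (s l))
    (hxs : ∀ k a l, Commute (x k a) (s l))
    (hgen : ∀ a ∈ G, J a = ∑ k ∈ Icc 1 m,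
      (embSite (fun k a => x k a) m k a - embSite (fun k a => x k a) m (k + 1) a) * tBlock s k m)
    {w : A} (hw : IsWord G w) :
    J w - ∑ k ∈ Icc 1 m, x k w * (tBlock s k m - tBlock s (k - 1) m) ∈ L := by
  set π : T →+* L.ringCon.Quotient := RingCon.mk' L.ringCon
  suffices π (J w) = π (∑ k ∈ Icc 1 m, x k w * (tBlock s k m - tBlock s (k - 1) m)) from
    (L.rel_iff _ _).mp ((RingCon.eq _).mp this)
  have hπ : ∀ y ∈ L, π y = 0 := fun y hy => (RingCon.eq _).mpr ((L.mem_iff y).mp hy)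
  set p : ℕ → L.ringCon.Quotient := fun l => π (s l)
  have hp : ∀ l, 1 ≤ l → l ≤ m → IsIdempotentElem (p l) := fun l h1 h2 => by
    have h := hπ _ (hs l h1 h2)
    rw [map_mul, map_sub, map_one, mul_sub, mul_one, sub_eq_zero] at h
    exact h.symm
  have hpc : ∀ k l, Commute (p k) (p l) := fun k l => (hsc k l).map π
  have hq := orthogonalIdempotents_sub_pred (tBlock_mul_tBlock hp hpc)
  have hgenπ : ∀ a ∈ G, π (J a) =
      ∑ k ∈ Icc 1 m, π (x k a) * (tBlock p k m - tBlock p (k - 1) m) := fun a ha => by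
    rw [hgen a ha, map_sum]
    simp only [map_mul, map_sub, map_tBlock]
    have hlast : embSite (fun k a => x k a) m (m + 1) a = 0 := if_neg (by omega)
    have hfirst : tBlock p 0 m = 0 := if_pos rfl
    rw [sum_Icc_sub_succ_mul, hlast, hfirst, map_zero, zero_mul, mul_zero, sub_zero, add_zero]
    refine Finset.sum_congr rfl fun k hk => ?_
    rw [embSite, if_pos (mem_Icc.mp hk)]
  have hxq : ∀ k a l, Commute (π (x k a)) (tBlock p l m - tBlock p (l - 1) m) := fun k a l =>
    have hxp : ∀ l', Commute (π (x k a)) (p l') := fun l' => (hxs k a l').map π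
    (Commute.tBlock_right p hxp l m).sub_right (Commute.tBlock_right p hxp (l - 1) m)
  have key := eq_sum_of_isWord ((π : T →* L.ringCon.Quotient).comp J)
    (fun k => (π : T →* L.ringCon.Quotient).comp (x k)) hq (Icc 1 m) hxq hgenπ hw
  simpa only [MonoidHom.comp_apply, MonoidHom.coe_coe, map_sum, map_mul, map_sub, map_tBlock]
    using key

theorem sub_sum_mem_of_isWord' {A T : Type*} [Monoid A] [Ring T] {G : Set A}
    (L : TwoSidedIdeal T) (J : A →* T) (x : ℕ → A →* T) (s : ℕ → T) (m : ℕ)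
    (hs : ∀ l, 1 ≤ l → l ≤ m → s l * (1 - s l) ∈ L) (hsc : ∀ k l, Commute (s k) (s l))
    (hxs : ∀ k a l, Commute (x k a) (s l))
    (hgen : ∀ a ∈ G, J a = ∑ k ∈ Icc 1 m,
      tBlock s k m * (embSite (fun k a => x k a) m k a - embSite (fun k a => x k a) m (k + 1) a))
    {w : A} (hw : IsWord G w) :
    J w - ∑ k ∈ Icc 1 m, (tBlock s k m - tBlock s (k - 1) m) * x k w ∈ L := by
  have hxt : ∀ k a n, Commute (x k a) (tBlock s n m) := fun k a n =>
    Commute.tBlock_right s (hxs k a) n m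
  have hembt : ∀ k a n, Commute (embSite (fun k a => x k a) m k a) (tBlock s n m) :=
    fun k a n => by
      unfold embSite
      split
      · exact hxt k a n
      · exact Commute.zero_left _
  rw [Finset.sum_congr rfl fun k _ => ((hxt k w k).sub_right (hxt k w (k - 1))).symm.eq]
  refine sub_sum_mem_of_isWord L J x s m hs hsc hxs (fun a ha => ?_) hw
  rw [hgen a ha]
  exact Finset.sum_congr rfl fun k _ => ((hembt k a k).sub_left (hembt (k + 1) a k)).symm.eq

/- For `i : Fin 2`, `A i` stands for `𝒜ᵢ₊₁` with generating set `G i`, `B i` for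
`𝒜̃ᵢ₊₁ = 𝒜ᵢ₊₁ * ℂ[t]` with embedding `ι i` and separator `t i`, and `T` for
`𝒜̃^{(m)} = 𝒜̃₁^{⊗m} ⊗ 𝒜̃₂^{⊗m}`, with `e i k` the embedding onto site `k` of block `i`. -/
theorem boolean_extension_component_form_general
    {A B : Fin 2 → Type*} {T : Type*}
    [∀ i, Ring (A i)] [∀ i, Algebra ℂ (A i)] [∀ i, StarRing (A i)]
    [∀ i, Ring (B i)] [∀ i, Algebra ℂ (B i)] [∀ i, StarRing (B i)]
    [Ring T] [Algebra ℂ T] [StarRing T]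
    (G : ∀ i, Set (A i))
    (ι : ∀ i, A i →⋆ₐ[ℂ] B i) (t : ∀ i, B i)
    (m : ℕ)
    (e : ∀ i, ℕ → B i →⋆ₐ[ℂ] T)
    (hcomm : ∀ (i i' : Fin 2) (k k' : ℕ), (i, k) ≠ (i', k') →
      ∀ (x : B i) (y : B i'), Commute (e i k x) (e i' k' y))
    -- the *-homomorphisms `j₁^{(m)}`, `j₂^{(m)}`, given on the generators by
    -- `j₁^{(m)}(a) = Σ_{k=1}^m (i_{k,m}(a) - i_{k+1,m}(a)) ⊗ t_{[k,m]}` and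
    -- `j₂^{(m)}(b) = Σ_{k=1}^m t_{[k,m]} ⊗ (i_{k,m}(b) - i_{k+1,m}(b))`
    (j : ∀ i, A i →⋆ₐ[ℂ] T)
    (hj1 : ∀ a ∈ G 0, j 0 a = ∑ k ∈ Finset.Icc 1 m,
      (embSite (fun l x => e 0 l x) m k (ι 0 a) - embSite (fun l x => e 0 l x) m (k + 1) (ι 0 a)) *
        tBlock (fun l => e 1 l (t 1)) k m)
    (hj2 : ∀ b ∈ G 1, j 1 b = ∑ k ∈ Finset.Icc 1 m,
      tBlock (fun l => e 0 l (t 0)) k m *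
        (embSite (fun l x => e 1 l x) m k (ι 1 b) - embSite (fun l x => e 1 l x) m (k + 1) (ι 1 b)))
    -- the two-sided *-ideal `L^{(m)}` generated by the elements `i_{k,2m}(t(1-t))`
    (L : TwoSidedIdeal T)
    (hL : L = TwoSidedIdeal.span
      {x : T | ∃ (i : Fin 2) (k : ℕ), 1 ≤ k ∧ k ≤ m ∧ x = e i k (t i * (1 - t i))})
    -- non-empty words `w`, `v` in `𝒜₁`, `𝒜₂`
    (w : A 0) (v : A 1) (hw : IsWord (G 0) w) (hv : IsWord (G 1) v) :
    -- `j₁^{(m)}(w) = Σ_{k=1}^m i_{k,m}(w) ⊗ (t_{[k,m]} - t_{[k-1,m]})  (mod L^{(m)})`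
    j 0 w - (∑ k ∈ Finset.Icc 1 m, e 0 k (ι 0 w) *
        (tBlock (fun l => e 1 l (t 1)) k m - tBlock (fun l => e 1 l (t 1)) (k - 1) m)) ∈ L
    ∧
    -- `j₂^{(m)}(v) = Σ_{k=1}^m (t_{[k,m]} - t_{[k-1,m]}) ⊗ i_{k,m}(v)  (mod L^{(m)})`
    j 1 v - (∑ k ∈ Finset.Icc 1 m,
        (tBlock (fun l => e 0 l (t 0)) k m - tBlock (fun l => e 0 l (t 0)) (k - 1) m) *
          e 1 k (ι 1 v)) ∈ L := by
  have hsep : ∀ i l, 1 ≤ l → l ≤ m → e i l (t i) * (1 - e i l (t i)) ∈ L := fun i l h1 h2 => by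
    rw [hL, ← map_one (e i l), ← map_sub, ← map_mul]
    exact TwoSidedIdeal.subset_span ⟨i, l, h1, h2, rfl⟩
  have hsc : ∀ i k l, Commute (e i k (t i)) (e i l (t i)) := fun i k l => by
    rcases eq_or_ne k l with rfl | hkl
    · exact Commute.refl _
    · exact hcomm i i k l (by simp [hkl]) _ _
  exact ⟨sub_sum_mem_of_isWord L (j 0) (fun k => (e 0 k).comp (ι 0)) (fun l => e 1 l (t 1)) m
      (hsep 1) (hsc 1) (fun k _ l => hcomm 0 1 k l (by simp) _ _) hj1 hw,
    sub_sum_mem_of_isWord' L (j 1) (fun k => (e 1 k).comp (ι 1)) (fun l => e 0 l (t 0)) m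
      (hsep 0) (hsc 0) (fun k _ l => hcomm 1 0 k l (by simp) _ _) hj2 hv⟩

theorem boolean_extension_component_form
    {A B : Fin 2 → Type*} {T : Type*}
    [∀ i, Ring (A i)] [∀ i, Algebra ℂ (A i)] [∀ i, StarRing (A i)] [∀ i, StarModule ℂ (A i)]
    [∀ i, Ring (B i)] [∀ i, Algebra ℂ (B i)] [∀ i, StarRing (B i)] [∀ i, StarModule ℂ (B i)]
    [Ring T] [Algebra ℂ T] [StarRing T] [StarModule ℂ T]
    (G : ∀ i, Set (A i)) (hG : ∀ i, ∀ x ∈ G i, star x ∈ G i)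
    (hA : ∀ i, Algebra.adjoin ℂ (G i) = ⊤)
    (ι : ∀ i, A i →⋆ₐ[ℂ] B i) (t : ∀ i, B i) (ht : ∀ i, star (t i) = t i)
    (hB : ∀ i, Algebra.adjoin ℂ (Set.range (ι i) ∪ {t i}) = ⊤)
    (m : ℕ) (hm : 1 ≤ m)
    (e : ∀ i, ℕ → B i →⋆ₐ[ℂ] T)
    (hcomm : ∀ (i i' : Fin 2) (k k' : ℕ), (i, k) ≠ (i', k') →
      ∀ (x : B i) (y : B i'), Commute (e i k x) (e i' k' y))
    (hT : Algebra.adjoin ℂ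
      {x : T | ∃ (i : Fin 2) (k : ℕ), 1 ≤ k ∧ k ≤ m ∧ ∃ b : B i, x = e i k b} = ⊤)
    -- the *-homomorphisms `j₁^{(m)}`, `j₂^{(m)}`, given on the generators by
    -- `j₁^{(m)}(a) = Σ_{k=1}^m (i_{k,m}(a) - i_{k+1,m}(a)) ⊗ t_{[k,m]}` and
    -- `j₂^{(m)}(b) = Σ_{k=1}^m t_{[k,m]} ⊗ (i_{k,m}(b) - i_{k+1,m}(b))`
    (j : ∀ i, A i →⋆ₐ[ℂ] T)
    (hj1 : ∀ a ∈ G 0, j 0 a = ∑ k ∈ Finset.Icc 1 m,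
      (embSite (fun l x => e 0 l x) m k (ι 0 a) - embSite (fun l x => e 0 l x) m (k + 1) (ι 0 a)) *
        tBlock (fun l => e 1 l (t 1)) k m)
    (hj2 : ∀ b ∈ G 1, j 1 b = ∑ k ∈ Finset.Icc 1 m,
      tBlock (fun l => e 0 l (t 0)) k m *
        (embSite (fun l x => e 1 l x) m k (ι 1 b) - embSite (fun l x => e 1 l x) m (k + 1) (ι 1 b)))
    -- the two-sided *-ideal `L^{(m)}` generated by the elements `i_{k,2m}(t(1-t))`
    (L : TwoSidedIdeal T)
    (hL : L = TwoSidedIdeal.span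
      {x : T | ∃ (i : Fin 2) (k : ℕ), 1 ≤ k ∧ k ≤ m ∧ x = e i k (t i * (1 - t i))})
    -- non-empty words `w`, `v` in `𝒜₁`, `𝒜₂`
    (w : A 0) (v : A 1) (hw : IsWord (G 0) w) (hv : IsWord (G 1) v) :
    -- `j₁^{(m)}(w) = Σ_{k=1}^m i_{k,m}(w) ⊗ (t_{[k,m]} - t_{[k-1,m]})  (mod L^{(m)})`
    j 0 w - (∑ k ∈ Finset.Icc 1 m, e 0 k (ι 0 w) *
        (tBlock (fun l => e 1 l (t 1)) k m - tBlock (fun l => e 1 l (t 1)) (k - 1) m)) ∈ L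
    ∧
    -- `j₂^{(m)}(v) = Σ_{k=1}^m (t_{[k,m]} - t_{[k-1,m]}) ⊗ i_{k,m}(v)  (mod L^{(m)})`
    j 1 v - (∑ k ∈ Finset.Icc 1 m,
        (tBlock (fun l => e 0 l (t 0)) k m - tBlock (fun l => e 0 l (t 0)) (k - 1) m) *
          e 1 k (ι 1 v)) ∈ L :=
  boolean_extension_component_form_general G ι t m e hcomm j hj1 hj2 L hL w v hw hv
end

section
/- For m = 1, the state Φ̃^{(1)} ∘ j^{(1)} on 𝒜₁ * 𝒜₂ is the Boolean product of φ₁ and φ₂: for any non-empty words w₁, …, wₙ in 𝒜_{k₁}, …, 𝒜_{kₙ} with k₁ ≠ k₂ ≠ … ≠ kₙ (k_i ∈ {1,2}), one has Φ̃^{(1)}(j_{k₁}^{(1)}(w₁) ⋯ j_{kₙ}^{(1)}(wₙ)) = φ_{k₁}(w₁) ⋯ φ_{kₙ}(wₙ), and Φ̃^{(1)}(j^{(1)}(1)) = 1. -/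
open scoped ComplexOrder TensorProduct

/-!
A word `w` of length `r` in the generators of `𝒜₁` is sent by `j₁` to `w ⊗ t^r`, and one in
`𝒜₂` by `j₂` to `t^r ⊗ w`. As the two tensor legs commute, an alternating product
`j_{k₁}(w₁) ⋯ j_{kₙ}(wₙ)` factors as `X ⊗ Y`, where `X` is the product, in order, of the `wᵢ`
with `kᵢ = 1` and of the powers `t^{rᵢ}` with `kᵢ = 2`, and symmetrically for `Y`. Merging
adjacent powers of `t` puts `X` in the form `t^{e₀} w₁ t^{e₁} ⋯ t^{eₘ}`; alternation and
`rᵢ > 0` make the interior exponents positive, so the Boolean extension evaluates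
`φ̃₁(X) = ∏_{kᵢ = 1} φ₁(wᵢ)`. Likewise for `Y`, and `Φ̃^{(1)} = φ̃₁ ⊗ φ̃₂` multiplies the two.
-/

section Letters

variable {R : Type*}

/- A letter `x : R ⊕ ℕ` stands for an element `.inl w` of `𝒜` or a power `.inr r` of `t`
in `𝒜 * ℂ[t]`. `groupLetters a L` is the normal form `t^{e₀} w₁ t^{e₁} ⋯ wₙ t^{eₙ}` of
`t^a` times the product of `L`, as the list of pairs `(eᵢ₋₁, wᵢ)` and the last exponent `eₙ`. -/
def groupLetters : ℕ → List (R ⊕ ℕ) → List (ℕ × R) × ℕ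
  | a, [] => ([], a)
  | a, .inr r :: L => groupLetters (a + r) L
  | a, .inl x :: L => ((a, x) :: (groupLetters 0 L).1, (groupLetters 0 L).2)

theorem pow_mul_prod_eq_groupLetters {S : Type*} [Monoid S] (ι : R → S) (t : S) (a : ℕ)
    (L : List (R ⊕ ℕ)) :
    t ^ a * (L.map (Sum.elim ι (t ^ ·))).prod =
      ((groupLetters a L).1.map fun p => t ^ p.1 * ι p.2).prod * t ^ (groupLetters a L).2 := by
  induction L generalizing a with
  | nil => simp [groupLetters]
  | cons x L ih =>
    cases x with
    | inl x => simp [groupLetters, ← ih 0, mul_assoc]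
    | inr r => simp [groupLetters, ← ih, pow_add, mul_assoc]

theorem prod_map_groupLetters {M : Type*} [Monoid M] (f : R → M) (a : ℕ) (L : List (R ⊕ ℕ)) :
    ((groupLetters a L).1.map fun p => f p.2).prod = (L.map (Sum.elim f 1)).prod := by
  induction L generalizing a with
  | nil => simp [groupLetters]
  | cons x L ih =>
    cases x with
    | inl x => simp [groupLetters, ih]
    | inr r => simp [groupLetters, ih]

theorem inl_mem_of_mem_groupLetters {p : ℕ × R} {a : ℕ} {L : List (R ⊕ ℕ)}
    (h : p ∈ (groupLetters a L).1) : .inl p.2 ∈ L := by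
  induction L generalizing a with
  | nil => simp [groupLetters] at h
  | cons x L ih =>
    cases x with
    | inl x =>
      simp only [groupLetters, List.mem_cons] at h ⊢
      rcases h with rfl | h
      · exact .inl rfl
      · exact .inr (ih h)
    | inr r => exact .tail _ (ih h)

theorem le_of_mem_head?_groupLetters {p : ℕ × R} {a : ℕ} {L : List (R ⊕ ℕ)}
    (h : p ∈ (groupLetters a L).1.head?) : a ≤ p.1 := by
  induction L generalizing a with
  | nil => simp [groupLetters] at h
  | cons x L ih =>
    cases x with
    | inl x =>
      simp only [groupLetters, List.head?_cons, Option.mem_def, Option.some.injEq] at h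
      simp [← h]
    | inr r => exact (Nat.le_add_right a r).trans (ih h)

theorem pos_of_mem_tail_groupLetters {p : ℕ × R} {a : ℕ} {L : List (R ⊕ ℕ)}
    (hpos : ∀ r, .inr r ∈ L → 0 < r) (hL : L.IsChain fun x y => x.isRight ∨ y.isRight)
    (h : p ∈ (groupLetters a L).1.tail) : 0 < p.1 := by
  induction L generalizing a with
  | nil => simp [groupLetters] at h
  | cons x L ih =>
    have ih' {b : ℕ} := @ih b (fun r hr => hpos r (.tail _ hr)) hL.tail
    cases x with
    | inr r => exact ih' h
    | inl x =>
      simp only [groupLetters, List.tail_cons] at h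
      rcases hg : (groupLetters 0 L).1 with _ | ⟨q, Q⟩
      · simp [hg] at h
      rw [hg, List.mem_cons] at h
      rcases h with rfl | h
      · rcases L with _ | ⟨y | r, L⟩
        · simp [groupLetters] at hg
        · simp at hL
        · have hp : p ∈ (groupLetters r L).1.head? := by
            simp only [groupLetters, zero_add] at hg
            simp [hg]
          exact lt_of_lt_of_le (hpos r (by simp)) (le_of_mem_head?_groupLetters hp)
      · exact ih' (by rw [hg]; exact h)

def IsLetter [Monoid R] (G : Set R) : R ⊕ ℕ → Prop :=
  Sum.elim (IsWord G) (0 < ·)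

end Letters

section BooleanExtension

variable {R S : Type*} [Ring R] [Algebra ℂ R] [Ring S] [Algebra ℂ S] {G : Set R} {ι : R → S}
  {t : S} {φ : R →ₗ[ℂ] ℂ} {φt : S →ₗ[ℂ] ℂ}

theorem IsBooleanExt.apply_list (hext : IsBooleanExt G ι t φ φt) (P : List (ℕ × R)) (m : ℕ)
    (hw : ∀ p ∈ P, IsWord G p.2) (he : ∀ p ∈ P.tail, 0 < p.1) :
    φt ((P.map fun p => t ^ p.1 * ι p.2).prod * t ^ m) = (P.map fun p => φ p.2).prod := by
  have key := hext.2 P.length (fun i => (P.getD i (0, 0)).2) (fun i => (P.map Prod.fst).getD i m)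
    (fun i hi => by simpa [hi] using hw _ (List.getElem_mem hi))
    (fun i hi0 hi => by
      obtain ⟨i, rfl⟩ := Nat.exists_eq_add_one_of_ne_zero hi0.ne'
      have hi' : i < P.tail.length := by simp; omega
      simpa [hi, List.getElem_tail hi'] using he _ (List.getElem_mem hi'))
  rw [List.getD_eq_default _ _ (by simp)] at key
  convert key using 4 <;> apply List.ext_getElem <;> simp_all

theorem IsBooleanExt.apply_prod_letters (hext : IsBooleanExt G ι t φ φt) (L : List (R ⊕ ℕ))
    (hL : ∀ x ∈ L, IsLetter G x) (hchain : L.IsChain fun x y => x.isRight ∨ y.isRight) :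
    φt (L.map (Sum.elim ι (t ^ ·))).prod = (L.map (Sum.elim φ 1)).prod := by
  rw [← one_mul (List.prod _), ← pow_zero t, pow_mul_prod_eq_groupLetters,
    hext.apply_list _ _ (fun p hp => hL _ (inl_mem_of_mem_groupLetters hp))
      (fun p hp => pos_of_mem_tail_groupLetters (fun r hr => hL _ hr) hchain hp),
    prod_map_groupLetters]

end BooleanExtension

theorem List.prod_map_mul_of_commute {α M N P F F' : Type*} [Monoid M] [Monoid N] [Monoid P]
    [FunLike F M P] [MonoidHomClass F M P] [FunLike F' N P] [MonoidHomClass F' N P]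
    {f : F} {g : F'} (comm : ∀ m n, Commute (f m) (g n)) (l : List α) (x : α → M) (y : α → N) :
    (l.map fun a => f (x a) * g (y a)).prod = f (l.map x).prod * g (l.map y).prod := by
  induction l with
  | nil => simp
  | cons a l ih =>
    simp only [List.map_cons, List.prod_cons, ih, map_mul, mul_assoc]
    rw [← mul_assoc (g (y a)), (comm _ _).symm.eq, mul_assoc]

section SiteLetters

variable {K : Type*} [DecidableEq K] {A : K → Type*}

/- The factor of `j_c(x)` at tensor site `d`, for `x ∈ 𝒜_c` a word of length `r`. -/
def siteLetter (d : K) {c : K} (x : A c) (r : ℕ) : A d ⊕ ℕ :=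
  if h : c = d then .inl (h ▸ x) else .inr r

@[simp]
theorem siteLetter_self {c : K} (x : A c) (r : ℕ) : siteLetter c x r = .inl x := dif_pos rfl

@[simp]
theorem siteLetter_of_ne {c d : K} (h : c ≠ d) (x : A c) (r : ℕ) : siteLetter d x r = .inr r :=
  dif_neg h

theorem isRight_siteLetter {c d : K} (x : A c) (r : ℕ) : (siteLetter d x r).isRight ↔ c ≠ d := by
  by_cases h : c = d
  · subst h; simp
  · simp [h]

theorem isChain_siteLetter {n : ℕ} {k : ℕ → K} (halt : ∀ i, i + 1 < n → k i ≠ k (i + 1))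
    (x : ∀ i, A (k i)) (r : ℕ → ℕ) (d : K) :
    ((List.range n).map fun i => siteLetter d (x i) (r i)).IsChain
      fun a b => a.isRight ∨ b.isRight := by
  rw [List.isChain_map, List.isChain_range]
  intro i hi
  simp only [isRight_siteLetter]
  by_cases h : k i = d
  · exact .inr (h ▸ (halt i (by omega)).symm)
  · exact .inl h

theorem prod_elim_siteLetter [Fintype K] {M : Type*} [CommMonoid M] (φ : ∀ c, A c → M) {c : K}
    (x : A c) (r : ℕ) : ∏ d, Sum.elim (φ d) 1 (siteLetter d x r) = φ c x := by
  rw [Finset.prod_eq_single c (fun d _ h => by simp [Ne.symm h]) (by simp)]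
  simp

variable [∀ c, Monoid (A c)]

theorem isLetter_siteLetter {G : ∀ c, Set (A c)} {c : K} {x : A c} {r : ℕ}
    (hx : IsWord (G c) x) (hr : 0 < r) (d : K) : IsLetter (G d) (siteLetter d x r) := by
  by_cases h : c = d
  · subst h; simpa [IsLetter]
  · simpa [IsLetter, h]

theorem prod_map_siteLetter {d : K} {B F : Type*} [Monoid B] [FunLike F (A d) B]
    [MonoidHomClass F (A d) B] (f : F) (s : B) {c : K} (l : List (A c)) :
    (l.map fun a => Sum.elim f (s ^ ·) (siteLetter d a 1)).prod =
      Sum.elim f (s ^ ·) (siteLetter d l.prod l.length) := by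
  by_cases h : c = d
  · subst h; simp [map_list_prod]
  · simp [h]

end SiteLetters

/- `A i` is `𝒜ᵢ₊₁` with generating set `G i`; `B i` is `𝒜̃ᵢ₊₁ = 𝒜ᵢ₊₁ * ℂ[t]` with canonical
embedding `ι i` and separator `t i`; `T = 𝒜̃₁ ⊗ 𝒜̃₂` with the commuting leg embeddings `e 0`,
`e 1`; `Φ = Φ̃^{(1)}` and `j i = jᵢ₊₁^{(1)}`. -/
theorem one_freeness_is_boolean_product_general
    {A B : Fin 2 → Type*} {T : Type*}
    [∀ i, Ring (A i)] [∀ i, Algebra ℂ (A i)] [∀ i, StarRing (A i)]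
    [∀ i, Ring (B i)] [∀ i, Algebra ℂ (B i)] [∀ i, StarRing (B i)]
    [Ring T] [Algebra ℂ T] [StarRing T]
    (G : ∀ i, Set (A i))
    (ι : ∀ i, A i →⋆ₐ[ℂ] B i) (t : ∀ i, B i)
    (e : ∀ i, B i →⋆ₐ[ℂ] T)
    (hcomm : ∀ (x : B 0) (y : B 1), Commute (e 0 x) (e 1 y))
    -- the states `φ₁`, `φ₂` and their Boolean extensions `φ̃₁`, `φ̃₂`
    (φ : ∀ i, A i →ₗ[ℂ] ℂ)
    (φt : ∀ i, B i →ₗ[ℂ] ℂ) (hφt : ∀ i, IsBooleanExt (G i) (ι i) (t i) (φ i) (φt i))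
    -- the tensor product state `Φ̃^{(1)} = φ̃₁ ⊗ φ̃₂`
    (Φ : T →ₗ[ℂ] ℂ)
    (hΦ : ∀ (x : B 0) (y : B 1), Φ (e 0 x * e 1 y) = φt 0 x * φt 1 y)
    -- the *-homomorphism `j^{(1)}`
    (j : ∀ i, A i →⋆ₐ[ℂ] T)
    (hj1 : ∀ a ∈ G 0, j 0 a = e 0 (ι 0 a) * e 1 (t 1))
    (hj2 : ∀ b ∈ G 1, j 1 b = e 0 (t 0) * e 1 (ι 1 b)) :
    -- `Φ̃^{(1)}(j^{(1)}(1)) = 1` and, for all alternating products of non-empty words,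
    -- `Φ̃^{(1)}(j_{k₁}^{(1)}(w₁) ⋯ j_{kₙ}^{(1)}(wₙ)) = φ_{k₁}(w₁) ⋯ φ_{kₙ}(wₙ)`
    Φ 1 = 1 ∧
    ∀ (n : ℕ) (k : ℕ → Fin 2) (w : ∀ i, A (k i)),
      (∀ i, i + 1 < n → k i ≠ k (i + 1)) →
      (∀ i < n, IsWord (G (k i)) (w i)) →
      Φ (((List.range n).map fun i => j (k i) (w i)).prod) =
        ((List.range n).map fun i => φ (k i) (w i)).prod := by
  refine ⟨by simpa [(hφt 0).1, (hφt 1).1] using hΦ 1 1, fun n k w halt hw => ?_⟩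
  have hj_gen : ∀ c, ∀ a ∈ G c, j c a = e 0 (Sum.elim (ι 0) (t 0 ^ ·) (siteLetter 0 a 1)) *
      e 1 (Sum.elim (ι 1) (t 1 ^ ·) (siteLetter 1 a 1)) := by
    simpa [Fin.forall_fin_two] using ⟨hj1, hj2⟩
  choose! l hne hl hwl using hw
  have hj : ∀ i ∈ List.range n, j (k i) (w i) =
      e 0 (Sum.elim (ι 0) (t 0 ^ ·) (siteLetter 0 (w i) (l i).length)) *
        e 1 (Sum.elim (ι 1) (t 1 ^ ·) (siteLetter 1 (w i) (l i).length)) := fun i hi => by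
    rw [List.mem_range] at hi
    rw [hwl i hi, map_list_prod, List.map_congr_left fun a ha => hj_gen _ a (hl i hi a ha),
      List.prod_map_mul_of_commute hcomm, prod_map_siteLetter, prod_map_siteLetter]
  have hletters (d : Fin 2) := (hφt d).apply_prod_letters
    ((List.range n).map fun i => siteLetter d (w i) (l i).length)
    (by
      simpa using fun i hi => isLetter_siteLetter (hwl i hi ▸ ⟨l i, hne i hi, hl i hi, rfl⟩)
        (List.length_pos_iff.2 (hne i hi)) d)
    (isChain_siteLetter halt w _ d)
  simp only [List.map_map, Function.comp_def] at hletters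
  rw [List.map_congr_left hj, List.prod_map_mul_of_commute hcomm, hΦ, hletters, hletters,
    ← List.prod_map_mul]
  refine congrArg List.prod (List.map_congr_left fun i _ => ?_)
  simpa [Fin.prod_univ_two] using prod_elim_siteLetter (fun c => ⇑(φ c)) (w i) (l i).length

theorem one_freeness_is_boolean_product
    {A B : Fin 2 → Type*} {T : Type*}
    [∀ i, Ring (A i)] [∀ i, Algebra ℂ (A i)] [∀ i, StarRing (A i)] [∀ i, StarModule ℂ (A i)]
    [∀ i, Ring (B i)] [∀ i, Algebra ℂ (B i)] [∀ i, StarRing (B i)] [∀ i, StarModule ℂ (B i)]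
    [Ring T] [Algebra ℂ T] [StarRing T] [StarModule ℂ T]
    (G : ∀ i, Set (A i)) (hG : ∀ i, ∀ x ∈ G i, star x ∈ G i)
    (hA : ∀ i, Algebra.adjoin ℂ (G i) = ⊤)
    (ι : ∀ i, A i →⋆ₐ[ℂ] B i) (t : ∀ i, B i) (ht : ∀ i, star (t i) = t i)
    (hB : ∀ i, Algebra.adjoin ℂ (Set.range (ι i) ∪ {t i}) = ⊤)
    (e : ∀ i, B i →⋆ₐ[ℂ] T)
    (hcomm : ∀ (x : B 0) (y : B 1), Commute (e 0 x) (e 1 y))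
    (hT : Algebra.adjoin ℂ ({x : T | ∃ b, x = e 0 b} ∪ {x : T | ∃ b, x = e 1 b}) = ⊤)
    -- the states `φ₁`, `φ₂` and their Boolean extensions `φ̃₁`, `φ̃₂`
    (φ : ∀ i, A i →ₗ[ℂ] ℂ) (hφ : ∀ i, IsState (φ i))
    (φt : ∀ i, B i →ₗ[ℂ] ℂ) (hφt : ∀ i, IsBooleanExt (G i) (ι i) (t i) (φ i) (φt i))
    -- the tensor product state `Φ̃^{(1)} = φ̃₁ ⊗ φ̃₂`
    (Φ : T →ₗ[ℂ] ℂ)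
    (hΦ : ∀ (x : B 0) (y : B 1), Φ (e 0 x * e 1 y) = φt 0 x * φt 1 y)
    -- the *-homomorphism `j^{(1)}`
    (j : ∀ i, A i →⋆ₐ[ℂ] T)
    (hj1 : ∀ a ∈ G 0, j 0 a = e 0 (ι 0 a) * e 1 (t 1))
    (hj2 : ∀ b ∈ G 1, j 1 b = e 0 (t 0) * e 1 (ι 1 b)) :
    -- `Φ̃^{(1)}(j^{(1)}(1)) = 1` and, for all alternating products of non-empty words,
    -- `Φ̃^{(1)}(j_{k₁}^{(1)}(w₁) ⋯ j_{kₙ}^{(1)}(wₙ)) = φ_{k₁}(w₁) ⋯ φ_{kₙ}(wₙ)`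
    Φ 1 = 1 ∧
    ∀ (n : ℕ) (k : ℕ → Fin 2) (w : ∀ i, A (k i)),
      (∀ i, i + 1 < n → k i ≠ k (i + 1)) →
      (∀ i < n, IsWord (G (k i)) (w i)) →
      Φ (((List.range n).map fun i => j (k i) (w i)).prod) =
        ((List.range n).map fun i => φ (k i) (w i)).prod :=
  one_freeness_is_boolean_product_general G ι t e hcomm φ φt hφt Φ hΦ j hj1 hj2
end

section
/- Let w₁, …, wₙ be non-empty words in 𝒜_{k₁}, …, 𝒜_{kₙ} with k₁ ≠ k₂ ≠ … ≠ kₙ (k_i ∈ {1,2}). Then Φ̃^{(1)}((j_{k₁}^{(1)}(w₁) − d_{k₁}^{(1)}(w₁)) ⋯ (j_{kₙ}^{(1)}(wₙ) − d_{kₙ}^{(1)}(wₙ))) = (φ_{k₁}(w₁) − ψ_{k₁}(w₁)) ⋯ (φ_{kₙ}(wₙ) − ψ_{kₙ}(wₙ)), where d₁^{(1)}(w) = ψ₁(w)·(1 ⊗ t) and d₂^{(1)}(v) = ψ₂(v)·(t ⊗ 1). (Proposition 2.3) -/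
open scoped ComplexOrder TensorProduct

lemma list_sum_map_mul_right' {α M : Type*} [NonUnitalNonAssocSemiring M]
    (L : List α) (f : α → M) (z : M) :
    (L.map fun r => f r * z).sum = (L.map f).sum * z := by
  induction L with
  | nil => simp
  | cons a L ih => simp [ih, add_mul]

/-- A standard monomial form in the free product `S = R * ℂ[t]`, recording the number of
words `N`, the product `c` of the state values, and the trailing exponent `q`. -/
def StdForm {R S : Type*} [Ring R] [Algebra ℂ R] [Ring S] [Algebra ℂ S]
    (G : Set R) (ι : R → S) (tt : S) (φ : R →ₗ[ℂ] ℂ)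
    (z : S) (N : ℕ) (c : ℂ) (q : ℕ) : Prop :=
  ∃ (w : ℕ → R) (ex : ℕ → ℕ),
    (∀ i < N, IsWord G (w i)) ∧ (∀ i, 0 < i → i < N → 0 < ex i) ∧ ex N = q ∧
    z = ((List.range N).map fun i => tt ^ ex i * ι (w i)).prod * tt ^ ex N ∧
    c = ((List.range N).map fun i => φ (w i)).prod

section Std
variable {R S : Type*} [Ring R] [Algebra ℂ R] [Ring S] [Algebra ℂ S]
variable {G : Set R} {ι : R → S} {tt : S} {φ : R →ₗ[ℂ] ℂ}

lemma stdForm_one : StdForm G ι tt φ 1 0 1 0 := by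
  refine ⟨fun _ => 1, fun _ => 0, ?_, ?_, rfl, ?_, ?_⟩ <;> simp

lemma stdForm_mul_pow {z N c q} (h : StdForm G ι tt φ z N c q) (a : ℕ) :
    StdForm G ι tt φ (z * tt ^ a) N c (q + a) := by
  obtain ⟨w, ex, h1, h2, h3, h4, h5⟩ := h
  refine ⟨w, fun i => if i = N then q + a else ex i, h1, ?_, by simp, ?_, h5⟩
  · intro i hi hiN
    show 0 < if i = N then q + a else ex i
    rw [if_neg hiN.ne]
    exact h2 i hi hiN
  · have hQ : ((List.range N).map fun i => tt ^ (if i = N then q + a else ex i) * ι (w i)).prod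
        = ((List.range N).map fun i => tt ^ ex i * ι (w i)).prod := by
      apply congrArg
      apply List.map_congr_left
      intro i hi
      rw [if_neg (List.mem_range.mp hi).ne]
    show z * tt ^ a = _ * tt ^ (if N = N then q + a else ex N)
    rw [hQ, if_pos rfl, h4, h3, mul_assoc, ← pow_add]

lemma stdForm_mul_word {z N c q} (h : StdForm G ι tt φ z N c q) (hq : 0 < q ∨ N = 0)
    {v : R} (hv : IsWord G v) :
    StdForm G ι tt φ (z * ι v) (N + 1) (c * φ v) 0 := by
  obtain ⟨w, ex, h1, h2, h3, h4, h5⟩ := h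
  have eA : (if N = N + 1 then 0 else ex N) = ex N := if_neg (by omega)
  have eB : ∀ v' : R, (if N = N then v else w N) = v := fun _ => if_pos rfl
  refine ⟨fun i => if i = N then v else w i, fun i => if i = N + 1 then 0 else ex i,
    ?_, ?_, ?_, ?_, ?_⟩
  · intro i hi
    show IsWord G (if i = N then v else w i)
    rcases Nat.lt_succ_iff_lt_or_eq.mp hi with hi' | hE
    · rw [if_neg hi'.ne]; exact h1 i hi'
    · rw [if_pos hE]; exact hv
  · intro i hi hiN
    show 0 < if i = N + 1 then 0 else ex i
    rw [if_neg (by omega)]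
    rcases Nat.lt_succ_iff_lt_or_eq.mp hiN with h' | hE
    · exact h2 i hi h'
    · rcases hq with hq' | hN
      · rw [hE, h3]; exact hq'
      · omega
  · show (if N + 1 = N + 1 then 0 else ex (N + 1)) = 0
    exact if_pos rfl
  · have hQ : ((List.range N).map fun i =>
          tt ^ (if i = N + 1 then 0 else ex i) * ι (if i = N then v else w i)).prod
        = ((List.range N).map fun i => tt ^ ex i * ι (w i)).prod := by
      apply congrArg
      apply List.map_congr_left
      intro i hi
      have := List.mem_range.mp hi
      rw [if_neg (by omega), if_neg (by omega)]
    simp only [List.range_succ, List.map_append, List.prod_append, List.map_cons,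
      List.map_nil, List.prod_cons, List.prod_nil, hQ, if_true, ite_true,
      eq_self_iff_true]
    rw [h4, h3, pow_zero, if_neg (show ¬N = N + 1 by omega)]
    simp only [mul_one, mul_assoc]
  · have hQ : ((List.range N).map fun i => φ (if i = N then v else w i)).prod
        = ((List.range N).map fun i => φ (w i)).prod := by
      apply congrArg
      apply List.map_congr_left
      intro i hi
      rw [if_neg (List.mem_range.mp hi).ne]
    simp only [List.range_succ, List.map_append, List.prod_append, List.map_cons,
      List.map_nil, List.prod_cons, List.prod_nil, hQ, if_true, ite_true,
      eq_self_iff_true]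
    rw [h5, mul_one]

lemma stdForm_eval {φt : S →ₗ[ℂ] ℂ} (hext : IsBooleanExt G ι tt φ φt)
    {z N c q} (h : StdForm G ι tt φ z N c q) : φt z = c := by
  obtain ⟨w, ex, h1, h2, h3, h4, h5⟩ := h
  rw [h4, h5]
  exact hext.2 N w ex h1 h2

end Std

/- Setting of `m = 1` (Boolean) case: `A i` is the unital free *-algebra `𝒜ᵢ₊₁` with
generating set `G i`; `B i` is `𝒜̃ᵢ₊₁ = 𝒜ᵢ₊₁ * ℂ[t]` with embedding `ι i` and hermitian
separator `t i`; `T = 𝒜̃₁ ⊗ 𝒜̃₂` with commuting embeddings `e 0`, `e 1`;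
`Φ = Φ̃^{(1)} = φ̃₁ ⊗ φ̃₂`; `j i = jᵢ₊₁^{(1)}`; and `d 0 w = ψ₁(w)·(1 ⊗ t)`,
`d 1 v = ψ₂(v)·(t ⊗ 1)`. -/
theorem boolean_centered_factorization
    {A B : Fin 2 → Type*} {T : Type*}
    [∀ i, Ring (A i)] [∀ i, Algebra ℂ (A i)] [∀ i, StarRing (A i)] [∀ i, StarModule ℂ (A i)]
    [∀ i, Ring (B i)] [∀ i, Algebra ℂ (B i)] [∀ i, StarRing (B i)] [∀ i, StarModule ℂ (B i)]
    [Ring T] [Algebra ℂ T] [StarRing T] [StarModule ℂ T]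
    (G : ∀ i, Set (A i)) (hG : ∀ i, ∀ x ∈ G i, star x ∈ G i)
    (hA : ∀ i, Algebra.adjoin ℂ (G i) = ⊤)
    (ι : ∀ i, A i →⋆ₐ[ℂ] B i) (t : ∀ i, B i) (ht : ∀ i, star (t i) = t i)
    (hB : ∀ i, Algebra.adjoin ℂ (Set.range (ι i) ∪ {t i}) = ⊤)
    (e : ∀ i, B i →⋆ₐ[ℂ] T)
    (hcomm : ∀ (x : B 0) (y : B 1), Commute (e 0 x) (e 1 y))
    (hT : Algebra.adjoin ℂ ({x : T | ∃ b, x = e 0 b} ∪ {x : T | ∃ b, x = e 1 b}) = ⊤)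
    -- the pairs of states `(φᵢ, ψᵢ)` and the Boolean extensions `φ̃ᵢ`
    (φ ψ : ∀ i, A i →ₗ[ℂ] ℂ) (hφ : ∀ i, IsState (φ i)) (hψ : ∀ i, IsState (ψ i))
    (φt : ∀ i, B i →ₗ[ℂ] ℂ) (hφt : ∀ i, IsBooleanExt (G i) (ι i) (t i) (φ i) (φt i))
    -- the tensor product state `Φ̃^{(1)} = φ̃₁ ⊗ φ̃₂`
    (Φ : T →ₗ[ℂ] ℂ)
    (hΦ : ∀ (x : B 0) (y : B 1), Φ (e 0 x * e 1 y) = φt 0 x * φt 1 y)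
    -- the *-homomorphism `j^{(1)}`
    (j : ∀ i, A i →⋆ₐ[ℂ] T)
    (hj1 : ∀ a ∈ G 0, j 0 a = e 0 (ι 0 a) * e 1 (t 1))
    (hj2 : ∀ b ∈ G 1, j 1 b = e 0 (t 0) * e 1 (ι 1 b))
    -- the maps `d₁^{(1)}(w) = ψ₁(w)·(1 ⊗ t)` and `d₂^{(1)}(v) = ψ₂(v)·(t ⊗ 1)`
    (d : ∀ i, A i → T)
    (hd1 : ∀ x, d 0 x = ψ 0 x • e 1 (t 1))
    (hd2 : ∀ x, d 1 x = ψ 1 x • e 0 (t 0))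
    -- non-empty words `w i` in `𝒜_{k i}`, with consecutive indices distinct
    (n : ℕ) (k : ℕ → Fin 2) (w : ∀ i, A (k i))
    (hk : ∀ i, i + 1 < n → k i ≠ k (i + 1))
    (hw : ∀ i < n, IsWord (G (k i)) (w i)) :
    Φ (((List.range n).map fun i => j (k i) (w i) - d (k i) (w i)).prod) =
      ((List.range n).map fun i => φ (k i) (w i) - ψ (k i) (w i)).prod := by
  classical
  have fin2 : ∀ i : Fin 2, i = 0 ∨ i = 1 := by decide
  -- multiplication rule for "tensor" terms
  have mulmul : ∀ (c c' : ℂ) (X X' : B 0) (Y Y' : B 1),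
      (c • (e 0 X * e 1 Y)) * (c' • (e 0 X' * e 1 Y')) =
        (c * c') • (e 0 (X * X') * e 1 (Y * Y')) := by
    intro c c' X X' Y Y'
    rw [smul_mul_assoc, mul_smul_comm, smul_smul]
    congr 1
    calc e 0 X * e 1 Y * (e 0 X' * e 1 Y')
        = e 0 X * (e 1 Y * e 0 X') * e 1 Y' := by simp only [mul_assoc]
      _ = e 0 X * (e 0 X' * e 1 Y) * e 1 Y' := by rw [← (hcomm X' Y).eq]
      _ = e 0 (X * X') * e 1 (Y * Y') := by
          rw [map_mul (e 0), map_mul (e 1)]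
          simp only [mul_assoc]
  -- `j` on words
  have J0 : ∀ La : List (A 0), (∀ x ∈ La, x ∈ G 0) →
      j 0 La.prod = e 0 (ι 0 La.prod) * e 1 (t 1 ^ La.length) := by
    intro La
    induction La with
    | nil => intro _; simp
    | cons x L ih =>
      intro hmem
      rw [List.prod_cons, map_mul, hj1 x (hmem x (by simp)),
        ih (fun y hy => hmem y (by simp [hy])), List.length_cons]
      calc e 0 (ι 0 x) * e 1 (t 1) * (e 0 (ι 0 L.prod) * e 1 (t 1 ^ L.length))
          = e 0 (ι 0 x) * (e 1 (t 1) * e 0 (ι 0 L.prod)) * e 1 (t 1 ^ L.length) := by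
            simp only [mul_assoc]
        _ = e 0 (ι 0 x) * (e 0 (ι 0 L.prod) * e 1 (t 1)) * e 1 (t 1 ^ L.length) := by
            rw [← (hcomm (ι 0 L.prod) (t 1)).eq]
        _ = e 0 (ι 0 (x * L.prod)) * e 1 (t 1 ^ (L.length + 1)) := by
            rw [map_mul (ι 0), map_mul (e 0), pow_succ', map_mul (e 1)]
            simp only [mul_assoc]
  have J1 : ∀ La : List (A 1), (∀ x ∈ La, x ∈ G 1) →
      j 1 La.prod = e 0 (t 0 ^ La.length) * e 1 (ι 1 La.prod) := by
    intro La
    induction La with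
    | nil => intro _; simp
    | cons x L ih =>
      intro hmem
      rw [List.prod_cons, map_mul, hj2 x (hmem x (by simp)),
        ih (fun y hy => hmem y (by simp [hy])), List.length_cons]
      calc e 0 (t 0) * e 1 (ι 1 x) * (e 0 (t 0 ^ L.length) * e 1 (ι 1 L.prod))
          = e 0 (t 0) * (e 1 (ι 1 x) * e 0 (t 0 ^ L.length)) * e 1 (ι 1 L.prod) := by
            simp only [mul_assoc]
        _ = e 0 (t 0) * (e 0 (t 0 ^ L.length) * e 1 (ι 1 x)) * e 1 (ι 1 L.prod) := by
            rw [← (hcomm (t 0 ^ L.length) (ι 1 x)).eq]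
        _ = e 0 (t 0 ^ (L.length + 1)) * e 1 (ι 1 (x * L.prod)) := by
            rw [map_mul (ι 1), map_mul (e 1), pow_succ', map_mul (e 0)]
            simp only [mul_assoc]
  -- transport along `k m = 0` / `k m = 1`
  have trans0 : ∀ (c : Fin 2), c = 0 → ∀ v : A c, ∃ a : A 0,
      j c v = j 0 a ∧ d c v = d 0 a ∧ φ c v = φ 0 a ∧ ψ c v = ψ 0 a ∧
      (IsWord (G c) v → IsWord (G 0) a) := by
    rintro c rfl v
    exact ⟨v, rfl, rfl, rfl, rfl, id⟩
  have trans1 : ∀ (c : Fin 2), c = 1 → ∀ v : A c, ∃ a : A 1,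
      j c v = j 1 a ∧ d c v = d 1 a ∧ φ c v = φ 1 a ∧ ψ c v = ψ 1 a ∧
      (IsWord (G c) v → IsWord (G 1) a) := by
    rintro c rfl v
    exact ⟨v, rfl, rfl, rfl, rfl, id⟩
  suffices H : ∀ m, m ≤ n →
      ∃ L : List (ℂ × B 0 × B 1),
        ((List.range m).map fun i => j (k i) (w i) - d (k i) (w i)).prod
          = (L.map fun r => r.1 • (e 0 r.2.1 * e 1 r.2.2)).sum ∧
        (L.map fun r => r.1 * (φt 0 r.2.1 * φt 1 r.2.2)).sum
          = ((List.range m).map fun i => φ (k i) (w i) - ψ (k i) (w i)).prod ∧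
        ∀ r ∈ L, ∃ N0 c0 q0 N1 c1 q1,
          StdForm (G 0) (ι 0) (t 0) (φ 0) r.2.1 N0 c0 q0 ∧
          StdForm (G 1) (ι 1) (t 1) (φ 1) r.2.2 N1 c1 q1 ∧
          (m < n → (k m = 0 → 0 < q0 ∨ N0 = 0) ∧ (k m = 1 → 0 < q1 ∨ N1 = 0)) by
    obtain ⟨L, hP, hS, -⟩ := H n le_rfl
    rw [hP, ← hS, map_list_sum, List.map_map]
    apply congrArg List.sum
    apply List.map_congr_left
    rintro ⟨c, X, Y⟩ -
    simp only [Function.comp_apply, map_smul, smul_eq_mul, hΦ]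
  intro m
  induction m with
  | zero =>
    intro _
    refine ⟨[(1, 1, 1)], by simp, by simp [(hφt 0).1, (hφt 1).1], ?_⟩
    rintro r hr
    simp only [List.mem_singleton] at hr
    subst hr
    exact ⟨0, 1, 0, 0, 1, 0, stdForm_one, stdForm_one,
      fun _ => ⟨fun _ => Or.inr rfl, fun _ => Or.inr rfl⟩⟩
  | succ m ih =>
    intro hm1
    have hm : m < n := hm1
    obtain ⟨L, hP, hS, hstd⟩ := ih hm.le
    have hPsucc : ((List.range (m + 1)).map fun i => j (k i) (w i) - d (k i) (w i)).prod
        = ((List.range m).map fun i => j (k i) (w i) - d (k i) (w i)).prod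
          * (j (k m) (w m) - d (k m) (w m)) := by
      rw [List.range_succ]
      simp
    have hTsucc : ((List.range (m + 1)).map fun i => φ (k i) (w i) - ψ (k i) (w i)).prod
        = ((List.range m).map fun i => φ (k i) (w i) - ψ (k i) (w i)).prod
          * (φ (k m) (w m) - ψ (k m) (w m)) := by
      rw [List.range_succ]
      simp
    rcases fin2 (k m) with hk0 | hk1
    · -- case `k m = 0`
      obtain ⟨a, hja, hda, hfa, hsa, hwa⟩ := trans0 (k m) hk0 (w m)
      have hWa : IsWord (G 0) a := hwa (hw m hm)
      obtain ⟨La, hne, hmem, hprod⟩ := id hWa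
      have hlen : 0 < La.length := List.length_pos_iff.mpr hne
      have hja' : j 0 a = e 0 (ι 0 a) * e 1 (t 1 ^ La.length) := by
        rw [hprod]; exact J0 La hmem
      have hFm : j (k m) (w m) - d (k m) (w m)
          = (1 : ℂ) • (e 0 (ι 0 a) * e 1 (t 1 ^ La.length))
            + (-(ψ 0 a)) • (e 0 1 * e 1 (t 1 ^ 1)) := by
        rw [hja, hda, hd1 a, hja']
        simp [sub_eq_add_neg]
      have hknext : m + 1 < n → k (m + 1) = 1 := by
        intro hsn
        rcases fin2 (k (m + 1)) with h | h
        · exact absurd (hk0.trans h.symm) (hk m hsn)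
        · exact h
      refine ⟨L.map (fun r => (r.1 * 1, r.2.1 * ι 0 a, r.2.2 * t 1 ^ La.length))
          ++ L.map (fun r => (r.1 * -(ψ 0 a), r.2.1 * 1, r.2.2 * t 1 ^ 1)), ?_, ?_, ?_⟩
      · rw [hPsucc, hP, hFm, mul_add, List.map_append, List.sum_append, List.map_map,
          List.map_map]
        congr 1
        · rw [← list_sum_map_mul_right' L (fun r => r.1 • (e 0 r.2.1 * e 1 r.2.2))
              ((1 : ℂ) • (e 0 (ι 0 a) * e 1 (t 1 ^ La.length)))]
          apply congrArg List.sum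
          apply List.map_congr_left
          rintro ⟨c, X, Y⟩ -
          exact mulmul c 1 X (ι 0 a) Y (t 1 ^ La.length)
        · rw [← list_sum_map_mul_right' L (fun r => r.1 • (e 0 r.2.1 * e 1 r.2.2))
              ((-(ψ 0 a)) • (e 0 1 * e 1 (t 1 ^ 1)))]
          apply congrArg List.sum
          apply List.map_congr_left
          rintro ⟨c, X, Y⟩ -
          exact mulmul c (-(ψ 0 a)) X 1 Y (t 1 ^ 1)
      · rw [hTsucc, ← hS, hfa, hsa, List.map_append, List.sum_append, List.map_map,
          List.map_map]
        have h1 : (L.map ((fun r : ℂ × B 0 × B 1 => r.1 * (φt 0 r.2.1 * φt 1 r.2.2)) ∘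
              fun r => (r.1 * 1, r.2.1 * ι 0 a, r.2.2 * t 1 ^ La.length))).sum
            = (L.map fun r : ℂ × B 0 × B 1 =>
                (r.1 * (φt 0 r.2.1 * φt 1 r.2.2)) * φ 0 a).sum := by
          apply congrArg List.sum
          apply List.map_congr_left
          rintro ⟨c, X, Y⟩ hr
          obtain ⟨N0, c0, q0, N1, c1, q1, st0, st1, hcnd⟩ := hstd _ hr
          have hq0 : 0 < q0 ∨ N0 = 0 := (hcnd hm).1 hk0
          have v1 : φt 0 (X * ι 0 a) = c0 * φ 0 a :=
            stdForm_eval (hφt 0) (stdForm_mul_word st0 hq0 hWa)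
          have v2 : φt 1 (Y * t 1 ^ La.length) = c1 :=
            stdForm_eval (hφt 1) (stdForm_mul_pow st1 La.length)
          have v3 : φt 0 X = c0 := stdForm_eval (hφt 0) st0
          have v4 : φt 1 Y = c1 := stdForm_eval (hφt 1) st1
          simp only [Function.comp_apply]
          rw [v1, v2, v3, v4]
          ring
        have h2 : (L.map ((fun r : ℂ × B 0 × B 1 => r.1 * (φt 0 r.2.1 * φt 1 r.2.2)) ∘
              fun r => (r.1 * -(ψ 0 a), r.2.1 * 1, r.2.2 * t 1 ^ 1))).sum
            = (L.map fun r : ℂ × B 0 × B 1 =>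
                (r.1 * (φt 0 r.2.1 * φt 1 r.2.2)) * (-(ψ 0 a))).sum := by
          apply congrArg List.sum
          apply List.map_congr_left
          rintro ⟨c, X, Y⟩ hr
          obtain ⟨N0, c0, q0, N1, c1, q1, st0, st1, hcnd⟩ := hstd _ hr
          have v2 : φt 1 (Y * t 1 ^ 1) = c1 :=
            stdForm_eval (hφt 1) (stdForm_mul_pow st1 1)
          have v3 : φt 0 X = c0 := stdForm_eval (hφt 0) st0
          have v4 : φt 1 Y = c1 := stdForm_eval (hφt 1) st1
          simp only [Function.comp_apply, mul_one]
          rw [v2, v3, v4]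
          ring
        rw [h1, h2, list_sum_map_mul_right', list_sum_map_mul_right']
        ring
      · rintro r' hr'
        rcases List.mem_append.mp hr' with h | h <;>
          obtain ⟨⟨c, X, Y⟩, hr, rfl⟩ := List.mem_map.mp h <;>
          obtain ⟨N0, c0, q0, N1, c1, q1, st0, st1, hcnd⟩ := hstd _ hr
        · have hq0 : 0 < q0 ∨ N0 = 0 := (hcnd hm).1 hk0
          exact ⟨N0 + 1, c0 * φ 0 a, 0, N1, c1, q1 + La.length,
            stdForm_mul_word st0 hq0 hWa, stdForm_mul_pow st1 La.length,
            fun hsn => ⟨fun h0 => absurd ((hknext hsn).symm.trans h0) (by decide),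
              fun _ => Or.inl (by omega)⟩⟩
        · refine ⟨N0, c0, q0, N1, c1, q1 + 1, ?_, stdForm_mul_pow st1 1,
            fun hsn => ⟨fun h0 => absurd ((hknext hsn).symm.trans h0) (by decide),
              fun _ => Or.inl (by omega)⟩⟩
          show StdForm (G 0) (ι 0) (t 0) (φ 0) (X * 1) N0 c0 q0
          rw [mul_one]
          exact st0
    · -- case `k m = 1`
      obtain ⟨a, hja, hda, hfa, hsa, hwa⟩ := trans1 (k m) hk1 (w m)
      have hWa : IsWord (G 1) a := hwa (hw m hm)
      obtain ⟨La, hne, hmem, hprod⟩ := id hWa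
      have hlen : 0 < La.length := List.length_pos_iff.mpr hne
      have hja' : j 1 a = e 0 (t 0 ^ La.length) * e 1 (ι 1 a) := by
        rw [hprod]; exact J1 La hmem
      have hFm : j (k m) (w m) - d (k m) (w m)
          = (1 : ℂ) • (e 0 (t 0 ^ La.length) * e 1 (ι 1 a))
            + (-(ψ 1 a)) • (e 0 (t 0 ^ 1) * e 1 1) := by
        rw [hja, hda, hd2 a, hja']
        simp [sub_eq_add_neg]
      have hknext : m + 1 < n → k (m + 1) = 0 := by
        intro hsn
        rcases fin2 (k (m + 1)) with h | h
        · exact h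
        · exact absurd (hk1.trans h.symm) (hk m hsn)
      refine ⟨L.map (fun r => (r.1 * 1, r.2.1 * t 0 ^ La.length, r.2.2 * ι 1 a))
          ++ L.map (fun r => (r.1 * -(ψ 1 a), r.2.1 * t 0 ^ 1, r.2.2 * 1)), ?_, ?_, ?_⟩
      · rw [hPsucc, hP, hFm, mul_add, List.map_append, List.sum_append, List.map_map,
          List.map_map]
        congr 1
        · rw [← list_sum_map_mul_right' L (fun r => r.1 • (e 0 r.2.1 * e 1 r.2.2))
              ((1 : ℂ) • (e 0 (t 0 ^ La.length) * e 1 (ι 1 a)))]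
          apply congrArg List.sum
          apply List.map_congr_left
          rintro ⟨c, X, Y⟩ -
          exact mulmul c 1 X (t 0 ^ La.length) Y (ι 1 a)
        · rw [← list_sum_map_mul_right' L (fun r => r.1 • (e 0 r.2.1 * e 1 r.2.2))
              ((-(ψ 1 a)) • (e 0 (t 0 ^ 1) * e 1 1))]
          apply congrArg List.sum
          apply List.map_congr_left
          rintro ⟨c, X, Y⟩ -
          exact mulmul c (-(ψ 1 a)) X (t 0 ^ 1) Y 1
      · rw [hTsucc, ← hS, hfa, hsa, List.map_append, List.sum_append, List.map_map,
          List.map_map]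
        have h1 : (L.map ((fun r : ℂ × B 0 × B 1 => r.1 * (φt 0 r.2.1 * φt 1 r.2.2)) ∘
              fun r => (r.1 * 1, r.2.1 * t 0 ^ La.length, r.2.2 * ι 1 a))).sum
            = (L.map fun r : ℂ × B 0 × B 1 =>
                (r.1 * (φt 0 r.2.1 * φt 1 r.2.2)) * φ 1 a).sum := by
          apply congrArg List.sum
          apply List.map_congr_left
          rintro ⟨c, X, Y⟩ hr
          obtain ⟨N0, c0, q0, N1, c1, q1, st0, st1, hcnd⟩ := hstd _ hr
          have hq1 : 0 < q1 ∨ N1 = 0 := (hcnd hm).2 hk1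
          have v1 : φt 1 (Y * ι 1 a) = c1 * φ 1 a :=
            stdForm_eval (hφt 1) (stdForm_mul_word st1 hq1 hWa)
          have v2 : φt 0 (X * t 0 ^ La.length) = c0 :=
            stdForm_eval (hφt 0) (stdForm_mul_pow st0 La.length)
          have v3 : φt 0 X = c0 := stdForm_eval (hφt 0) st0
          have v4 : φt 1 Y = c1 := stdForm_eval (hφt 1) st1
          simp only [Function.comp_apply]
          rw [v1, v2, v3, v4]
          ring
        have h2 : (L.map ((fun r : ℂ × B 0 × B 1 => r.1 * (φt 0 r.2.1 * φt 1 r.2.2)) ∘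
              fun r => (r.1 * -(ψ 1 a), r.2.1 * t 0 ^ 1, r.2.2 * 1))).sum
            = (L.map fun r : ℂ × B 0 × B 1 =>
                (r.1 * (φt 0 r.2.1 * φt 1 r.2.2)) * (-(ψ 1 a))).sum := by
          apply congrArg List.sum
          apply List.map_congr_left
          rintro ⟨c, X, Y⟩ hr
          obtain ⟨N0, c0, q0, N1, c1, q1, st0, st1, hcnd⟩ := hstd _ hr
          have v2 : φt 0 (X * t 0 ^ 1) = c0 :=
            stdForm_eval (hφt 0) (stdForm_mul_pow st0 1)
          have v3 : φt 0 X = c0 := stdForm_eval (hφt 0) st0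
          have v4 : φt 1 Y = c1 := stdForm_eval (hφt 1) st1
          simp only [Function.comp_apply, mul_one]
          rw [v2, v3, v4]
          ring
        rw [h1, h2, list_sum_map_mul_right', list_sum_map_mul_right']
        ring
      · rintro r' hr'
        rcases List.mem_append.mp hr' with h | h <;>
          obtain ⟨⟨c, X, Y⟩, hr, rfl⟩ := List.mem_map.mp h <;>
          obtain ⟨N0, c0, q0, N1, c1, q1, st0, st1, hcnd⟩ := hstd _ hr
        · have hq1 : 0 < q1 ∨ N1 = 0 := (hcnd hm).2 hk1
          exact ⟨N0, c0, q0 + La.length, N1 + 1, c1 * φ 1 a, 0,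
            stdForm_mul_pow st0 La.length, stdForm_mul_word st1 hq1 hWa,
            fun hsn => ⟨fun _ => Or.inl (by omega),
              fun h0 => absurd ((hknext hsn).symm.trans h0) (by decide)⟩⟩
        · refine ⟨N0, c0, q0 + 1, N1, c1, q1, stdForm_mul_pow st0 1, ?_,
            fun hsn => ⟨fun _ => Or.inl (by omega),
              fun h0 => absurd ((hknext hsn).symm.trans h0) (by decide)⟩⟩
          show StdForm (G 1) (ι 1) (t 1) (φ 1) (Y * 1) N1 c1 q1
          rw [mul_one]
          exact st1
end

section
/- For every m ∈ ℕ, the two-sided *-ideal L^{(m)} of 𝒜̃^{(m)} generated by the elements i_{k,2m}(t(1−t)), 1 ≤ k ≤ 2m, is contained in the kernel of the state Φ̃^{(m)}. (Remark 3, Section 2) -/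
open scoped ComplexOrder TensorProduct

/- In the following, for `i : Fin 2`:
* `A i` plays the role of the unital free *-algebra `𝒜ᵢ₊₁` with generating set `G i`
  (closed under the involution), so that `A i` is generated by `G i`;
* `B i` plays the role of `𝒜̃ᵢ₊₁ = 𝒜ᵢ₊₁ * ℂ[t]`, with canonical embedding `ι i` and with
  the hermitian separator `t i`, which together generate `B i`;
* `T` plays the role of the tensor product `𝒜̃^{(m)} = 𝒜̃₁^{⊗m} ⊗ 𝒜̃₂^{⊗m}`, with the
  canonical commuting embeddings `e i k : B i → T` onto the tensor sites `k = 1, …, m`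
  (site `k` of block `i`), whose images generate `T`. -/
set_option linter.unusedSectionVars false
set_option maxHeartbeats 1000000

section Pform
variable {R S : Type*} [Ring R] [Algebra ℂ R] [Ring S] [Algebra ℂ S]

/-- normal form monomial -/
def Pform (ι : R → S) (t : S) (n : ℕ) (w : ℕ → R) (e : ℕ → ℕ) : S :=
  ((List.range n).map fun i => t ^ e i * ι (w i)).prod * t ^ e n

/-- the normal form set -/
def NF (G : Set R) (ι : R → S) (t : S) : Set S :=
  {x | ∃ n w e, (∀ i < n, IsWord G (w i)) ∧ (∀ i, 0 < i → i < n → 0 < e i) ∧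
    x = Pform ι t n w e}

variable (ι : R → S) (t : S)

lemma Pform_mul_t (n w e) :
    Pform ι t n w e * t = Pform ι t n w (Function.update e n (e n + 1)) := by
  unfold Pform
  have h1 : ((List.range n).map fun i => t ^ (Function.update e n (e n + 1)) i * ι (w i))
      = (List.range n).map fun i => t ^ e i * ι (w i) := by
    refine List.map_congr_left fun i hi => ?_
    rw [List.mem_range] at hi
    rw [Function.update_of_ne (by omega)]
  rw [h1, Function.update_self, pow_succ, mul_assoc]

lemma Pform_mul_gen_pos (n w e a)  :
    Pform ι t n w e * ι a =
      Pform ι t (n + 1) (Function.update w n a) (Function.update e (n + 1) 0) := by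
  unfold Pform
  rw [List.range_succ, List.map_append, List.prod_append]
  have h1 : ((List.range n).map fun i =>
      t ^ (Function.update e (n+1) 0) i * ι ((Function.update w n a) i))
      = (List.range n).map fun i => t ^ e i * ι (w i) := by
    refine List.map_congr_left fun i hi => ?_
    rw [List.mem_range] at hi
    rw [Function.update_of_ne (by omega), Function.update_of_ne (by omega)]
  rw [h1]
  simp only [List.map_cons, List.map_nil, List.prod_cons, List.prod_nil,
    Function.update_self, Function.update_of_ne (Nat.succ_ne_self n).symm ,
    Function.update_of_ne (by omega : n ≠ n + 1)]
  rw [pow_zero, mul_one, mul_one, mul_assoc]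

end Pform

set_option linter.unusedSectionVars false

section Pform2
variable {R S : Type*} [Ring R] [Algebra ℂ R] [Ring S] [Algebra ℂ S]
variable (ι : R → S) (t : S)

lemma Pform_mul_gen_merge (hmul : ∀ a b, ι (a * b) = ι a * ι b) (n w e a)
    (hn : e (n + 1) = 0) :
    Pform ι t (n + 1) w e * ι a = Pform ι t (n + 1) (Function.update w n (w n * a)) e := by
  unfold Pform
  rw [List.range_succ]
  simp only [List.map_append, List.prod_append]
  have h1 : ((List.range n).map fun i => t ^ e i * ι ((Function.update w n (w n * a)) i))
      = (List.range n).map fun i => t ^ e i * ι (w i) := by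
    refine List.map_congr_left fun i hi => ?_
    rw [List.mem_range] at hi
    rw [Function.update_of_ne (by omega)]
  rw [h1, hn]
  simp only [List.map_cons, List.map_nil, List.prod_cons, List.prod_nil,
    Function.update_self, pow_zero, mul_one, hmul, mul_assoc]

lemma Pform_concat (n w e n' w' e' d) :
    Pform ι t n w e * t ^ d * Pform ι t n' w' e' =
      Pform ι t (n + n') (fun i => if i < n then w i else w' (i - n))
        (fun i => if i < n then e i else if i = n then e n + d + e' 0 else e' (i - n)) := by
  unfold Pform
  rw [List.range_add, List.map_append, List.prod_append, List.map_map]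
  have h1 : ((List.range n).map fun i => t ^ (if i < n then e i else
        if i = n then e n + d + e' 0 else e' (i - n)) * ι (if i < n then w i else w' (i - n)))
      = (List.range n).map fun i => t ^ e i * ι (w i) := by
    refine List.map_congr_left fun i hi => ?_
    rw [List.mem_range] at hi
    simp [hi]
  rw [h1]
  rcases n' with _ | j
  · simp only [List.range_zero, List.map_nil, List.prod_nil, mul_one, Nat.add_zero]
    have : ¬ (n < n) := lt_irrefl n
    simp only [this, if_false, if_pos rfl, if_true]
    rw [pow_add, pow_add, one_mul]
    simp only [mul_assoc]
  · rw [mul_assoc, mul_assoc, mul_assoc]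
    congr 1
    set F : ℕ → S := fun i => t ^ (if i < n then e i else
      if i = n then e n + d + e' 0 else e' (i - n)) * ι (if i < n then w i else w' (i - n))
      with hF
    have hFn : F n = t ^ e n * (t ^ d * (t ^ e' 0 * ι (w' 0))) := by
      have h0 : F n = t ^ (e n + d + e' 0) * ι (w' 0) := by simp [hF]
      rw [h0, pow_add, pow_add, mul_assoc, mul_assoc]
    have h2 : (List.range j).map (fun i => F (n + Nat.succ i))
        = (List.range j).map (fun i => t ^ e' (Nat.succ i) * ι (w' (Nat.succ i))) := by
      refine List.map_congr_left fun i hi => ?_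
      have hlt : ¬ (n + Nat.succ i < n) := by omega
      have hne : ¬ (n + Nat.succ i = n) := by omega
      have hs : n + Nat.succ i - n = Nat.succ i := by omega
      simp only [hF, hlt, hne, if_false, hs]
    have h3 : (List.range j).map (fun i => t ^ e' (Nat.succ i) * ι (w' (Nat.succ i)))
        = (List.range j).map ((fun i => t ^ e' i * ι (w' i)) ∘ Nat.succ) := rfl
    have hlast : (if n + (j+1) < n then e (n + (j+1)) else if n + (j+1) = n
        then e n + d + e' 0 else e' (n + (j+1) - n)) = e' (j+1) := by
      have hlt : ¬ (n + (j+1) < n) := by omega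
      have hne : ¬ (n + (j+1) = n) := by omega
      have hs : n + (j+1) - n = j + 1 := by omega
      simp only [hlt, hne, if_false, hs]
    rw [List.range_succ_eq_map, List.map_cons, List.prod_cons, List.map_map]
    have h4 : (fun i => t ^ (if i < n then e i else if i = n then e n + d + e' 0
        else e' (i - n)) * ι (if i < n then w i else w' (i - n))) ∘ (fun x => n + x)
        = fun i => F (n + i) := rfl
    rw [h4]
    have h5 : (List.map Nat.succ (List.range j)).map (fun i => F (n + i))
        = (List.range j).map (fun i => F (n + Nat.succ i)) := by
      rw [List.map_map]; rfl
    rw [List.map_cons, List.prod_cons, h5, h2, h3, ← List.map_map]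
    have h6 : F (n + 0) = t ^ e n * (t ^ d * (t ^ e' 0 * ι (w' 0))) := hFn
    simp only [h6, hlast, mul_assoc]

end Pform2

section Span
variable {R S : Type*} [Ring R] [Algebra ℂ R] [Ring S] [Algebra ℂ S]

lemma IsWord.mul {G : Set R} {a b : R} (ha : IsWord G a) (hb : IsWord G b) :
    IsWord G (a * b) := by
  obtain ⟨l1, h1, h2, rfl⟩ := ha
  obtain ⟨l2, h3, h4, rfl⟩ := hb
  exact ⟨l1 ++ l2, by simp [h1], by intro x hx; rcases List.mem_append.mp hx with h | h
                                    exacts [h2 x h, h4 x h], (List.prod_append).symm⟩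

lemma mem_closure_word {G : Set R} {x : R} (hx : x ∈ Submonoid.closure G) :
    x = 1 ∨ IsWord G x := by
  induction hx using Submonoid.closure_induction with
  | mem z hz => exact Or.inr ⟨[z], by simp, by simpa using hz, by simp⟩
  | one => exact Or.inl rfl
  | mul a b _ _ ha hb =>
    rcases ha with rfl | ha
    · rcases hb with rfl | hb
      · exact Or.inl (one_mul 1)
      · exact Or.inr (by rwa [one_mul])
    · rcases hb with rfl | hb
      · exact Or.inr (by rwa [mul_one])
      · exact Or.inr (ha.mul hb)

lemma one_mem_NF (G : Set R) (ι : R → S) (t : S) : (1 : S) ∈ NF G ι t :=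
  ⟨0, fun _ => 1, fun _ => 0, by simp, by simp, by simp [Pform]⟩

lemma mul_right_span {N : Set S} {y x : S}
    (hx : x ∈ Submodule.span ℂ N) (key : ∀ z ∈ N, z * y ∈ Submodule.span ℂ N) :
    x * y ∈ Submodule.span ℂ N := by
  induction hx using Submodule.span_induction with
  | mem z hz => exact key z hz
  | zero => rw [zero_mul]; exact zero_mem _
  | add a b _ _ ha hb => rw [add_mul]; exact add_mem ha hb
  | smul c a _ ha => rw [smul_mul_assoc]; exact Submodule.smul_mem _ _ ha

lemma span_NF (G : Set R) (ι : R →ₐ[ℂ] S) (t : S)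
    (hA : Algebra.adjoin ℂ G = ⊤)
    (hB : Algebra.adjoin ℂ (Set.range ⇑ι ∪ {t}) = ⊤) :
    Submodule.span ℂ (NF G ⇑ι t) = ⊤ := by
  refine top_unique ?_
  have h1 : (⊤ : Submodule ℂ S) =
      Submodule.span ℂ (Submonoid.closure (Set.range ⇑ι ∪ {t}) : Set S) := by
    rw [← Algebra.top_toSubmodule, ← hB, Algebra.adjoin_eq_span]
  rw [h1]
  refine Submodule.span_le.mpr ?_
  intro x hx
  rw [SetLike.mem_coe] at hx
  induction hx using Submonoid.closure_induction_right with
  | one => exact Submodule.subset_span (one_mem_NF G ⇑ι t)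
  | mul_right x hx y hy ih =>
    refine mul_right_span ih ?_
    rintro z ⟨n, w, e, hw, he, rfl⟩
    rcases hy with ⟨a, rfl⟩ | hy
    · -- y = ι a
      have ha : a ∈ Submodule.span ℂ (Submonoid.closure G : Set R) := by
        have h2 : (⊤ : Submodule ℂ R) =
            Submodule.span ℂ (Submonoid.closure G : Set R) := by
          rw [← Algebra.top_toSubmodule, ← hA, Algebra.adjoin_eq_span]
        rw [← h2]; trivial
      induction ha using Submodule.span_induction with
      | mem b hb =>
        rcases mem_closure_word hb with rfl | hb
        · rw [map_one, mul_one]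
          exact Submodule.subset_span ⟨n, w, e, hw, he, rfl⟩
        · rcases Nat.eq_zero_or_pos (e n) with hn | hn
          · rcases n with _ | j
            · refine Submodule.subset_span ⟨1, fun _ => b, fun _ => 0, ?_, by omega, ?_⟩
              · intro i _; exact hb
              · have : Pform ⇑ι t 0 w e = 1 := by simp [Pform, hn]
                rw [this, one_mul]; simp [Pform]
            · rw [Pform_mul_gen_merge ⇑ι t (map_mul ι) j w e b hn]
              refine Submodule.subset_span ⟨j + 1, _, e, ?_, he, rfl⟩
              intro i hi
              rcases eq_or_ne i j with rfl | hij
              · rw [Function.update_self]; exact (hw i hi).mul hb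
              · rw [Function.update_of_ne hij]; exact hw i hi
          · rw [Pform_mul_gen_pos ⇑ι t n w e b]
            refine Submodule.subset_span ⟨n + 1, _, _, ?_, ?_, rfl⟩
            · intro i hi
              rcases eq_or_ne i n with rfl | hin
              · rw [Function.update_self]; exact hb
              · rw [Function.update_of_ne hin]; exact hw i (by omega)
            · intro i h0 hi
              rw [Function.update_of_ne (by omega)]
              rcases eq_or_ne i n with rfl | hin
              · exact hn
              · exact he i h0 (by omega)
      | zero => rw [map_zero, mul_zero]; exact zero_mem _
      | add b c _ _ hb hc => rw [map_add, mul_add]; exact add_mem hb hc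
      | smul c b _ hb =>
        rw [map_smul, mul_smul_comm]; exact Submodule.smul_mem _ _ hb
    · -- y = t
      rw [Set.mem_singleton_iff] at hy
      subst hy
      rw [Pform_mul_t]
      refine Submodule.subset_span ⟨n, w, _, hw, ?_, rfl⟩
      intro i h0 hi
      rw [Function.update_of_ne (by omega)]
      exact he i h0 hi

end Span

section Kill
variable {R S : Type*} [Ring R] [Algebra ℂ R] [Ring S] [Algebra ℂ S]

lemma boolext_kills (G : Set R) (ι : R →ₐ[ℂ] S) (t : S) (φ : R →ₗ[ℂ] ℂ)
    (χ : S →ₗ[ℂ] ℂ)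
    (hA : Algebra.adjoin ℂ G = ⊤)
    (hB : Algebra.adjoin ℂ (Set.range ⇑ι ∪ {t}) = ⊤)
    (hχ : IsBooleanExt G ⇑ι t φ χ) :
    ∀ u v : S, χ (u * (t * (1 - t)) * v) = 0 := by
  have key : ∀ u ∈ NF G ⇑ι t, ∀ v ∈ NF G ⇑ι t, χ (u * (t * (1 - t)) * v) = 0 := by
    rintro u ⟨n, w, e, hw, he, rfl⟩ v ⟨n', w', e', hw', he', rfl⟩
    have hd : ∀ d : ℕ, 0 < d →
        χ (Pform ⇑ι t n w e * t ^ d * Pform ⇑ι t n' w' e') =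
        ((List.range (n + n')).map fun i => φ (if i < n then w i else w' (i - n))).prod := by
      intro d hdpos
      rw [Pform_concat]
      simp only [Pform]
      refine hχ.2 (n + n') _ _ ?_ ?_
      · intro i hi
        by_cases h : i < n
        · simpa [h] using hw i h
        · simpa [h] using hw' (i - n) (by omega)
      · intro i h0 hi
        by_cases h : i < n
        · simpa [h] using he i h0 h
        · rcases eq_or_ne i n with rfl | hin
          · rw [if_neg h, if_pos rfl]; omega
          · rw [if_neg h, if_neg hin]
            exact he' (i - n) (by omega) (by omega)
    have hsplit : Pform ⇑ι t n w e * (t * (1 - t)) * Pform ⇑ι t n' w' e' =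
        Pform ⇑ι t n w e * t ^ 1 * Pform ⇑ι t n' w' e' -
          Pform ⇑ι t n w e * t ^ 2 * Pform ⇑ι t n' w' e' := by
      have : t * (1 - t) = t ^ 1 - t ^ 2 := by rw [mul_one_sub, pow_one, pow_two]
      rw [this, mul_sub, sub_mul]
    rw [hsplit, map_sub, hd 1 one_pos, hd 2 two_pos, sub_self]
  have spanTop := span_NF G ι t hA hB
  have step1 : ∀ u ∈ NF G ⇑ι t, ∀ v : S, χ (u * (t * (1 - t)) * v) = 0 := by
    intro u hu v
    have hv : v ∈ Submodule.span ℂ (NF G ⇑ι t) := by rw [spanTop]; trivial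
    induction hv using Submodule.span_induction with
    | mem z hz => exact key u hu z hz
    | zero => rw [mul_zero, map_zero]
    | add a b _ _ ha hb => rw [mul_add, map_add, ha, hb, add_zero]
    | smul c a _ ha => rw [mul_smul_comm, map_smul, ha, smul_zero]
  intro u v
  have hu : u ∈ Submodule.span ℂ (NF G ⇑ι t) := by rw [spanTop]; trivial
  induction hu using Submodule.span_induction with
  | mem z hz => exact step1 z hz v
  | zero => rw [zero_mul, zero_mul, map_zero]
  | add a b _ _ ha hb => rw [add_mul, add_mul, map_add, ha, hb, add_zero]
  | smul c a _ ha => rw [smul_mul_assoc, smul_mul_assoc, map_smul, ha, smul_zero]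

end Kill


section OrdProd
variable {M : Type*} [Monoid M]

lemma ordProd_one_eq (f : ℕ → M) (m : ℕ) :
    ordProd f 1 m = ((List.range' 1 m).map f).prod := by
  simp [ordProd]

lemma ordProd_zero (f : ℕ → M) : ordProd f 1 0 = 1 := by
  simp [ordProd]

lemma ordProd_succ (f : ℕ → M) (m : ℕ) :
    ordProd f 1 (m + 1) = ordProd f 1 m * f (m + 1) := by
  rw [ordProd_one_eq, ordProd_one_eq, List.range'_concat, List.map_append,
    List.prod_append]
  simp [Nat.add_comm]

lemma commute_ordProd (x : M) (f : ℕ → M) (m : ℕ)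
    (h : ∀ k, 1 ≤ k → k ≤ m → Commute x (f k)) : Commute x (ordProd f 1 m) := by
  rw [ordProd_one_eq]
  refine Commute.list_prod_right _ _ fun y hy => ?_
  rw [List.mem_map] at hy
  obtain ⟨k, hk, rfl⟩ := hy
  rw [List.mem_range'_1] at hk
  exact h k hk.1 (by omega)

lemma ordProd_mul_ordProd (f g : ℕ → M) (m : ℕ)
    (h : ∀ k k', 1 ≤ k → k ≤ m → 1 ≤ k' → k' ≤ m → k ≠ k' → Commute (f k) (g k')) :
    ordProd f 1 m * ordProd g 1 m = ordProd (fun k => f k * g k) 1 m := by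
  induction m with
  | zero => simp [ordProd_zero]
  | succ m ih =>
    rw [ordProd_succ, ordProd_succ, ordProd_succ]
    have hc : Commute (f (m + 1)) (ordProd g 1 m) :=
      commute_ordProd _ _ _ fun k hk1 hk2 =>
        h (m + 1) k (by omega) (le_refl _) hk1 (by omega) (by omega)
    calc ordProd f 1 m * f (m + 1) * (ordProd g 1 m * g (m + 1))
        = ordProd f 1 m * (f (m + 1) * ordProd g 1 m) * g (m + 1) := by
          simp [mul_assoc]
      _ = ordProd f 1 m * (ordProd g 1 m * f (m + 1)) * g (m + 1) := by
          rw [hc.eq]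
      _ = (ordProd f 1 m * ordProd g 1 m) * (f (m + 1) * g (m + 1)) := by
          simp [mul_assoc]
      _ = _ := by
          rw [ih fun k k' hk1 hk2 hk1' hk2' hne =>
            h k k' hk1 (by omega) hk1' (by omega) hne]

lemma ordProd_eq_one (f : ℕ → M) (m : ℕ) (h : ∀ j, 1 ≤ j → j ≤ m → f j = 1) :
    ordProd f 1 m = 1 := by
  induction m with
  | zero => simp [ordProd_zero]
  | succ m ih =>
    rw [ordProd_succ, h (m + 1) (by omega) (le_refl _), mul_one]
    exact ih fun j h1 h2 => h j h1 (by omega)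

lemma ordProd_single (f : ℕ → M) (m k : ℕ) (hk1 : 1 ≤ k) (hk2 : k ≤ m)
    (h1 : ∀ j, 1 ≤ j → j ≤ m → j ≠ k → f j = 1) : ordProd f 1 m = f k := by
  induction m with
  | zero => omega
  | succ m ih =>
    rw [ordProd_succ]
    rcases eq_or_ne k (m + 1) with rfl | hne
    · rw [ordProd_eq_one f m fun j hj1 hj2 => h1 j hj1 (by omega) (by omega), one_mul]
    · rw [h1 (m + 1) (by omega) (le_refl _) (fun h => hne h.symm), mul_one]
      exact ih (by omega) fun j hj1 hj2 hj3 => h1 j hj1 (by omega) hj3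

end OrdProd

lemma ordProd_zero_of {m k : ℕ} (v : ℕ → ℂ) (hk1 : 1 ≤ k) (hk2 : k ≤ m)
    (hv : v k = 0) : ordProd v 1 m = 0 := by
  rw [ordProd_one_eq]
  refine List.prod_eq_zero ?_
  rw [List.mem_map]
  exact ⟨k, List.mem_range'_1.mpr ⟨hk1, by omega⟩, hv⟩
section Shuffle
variable {M : Type*} [Monoid M]

lemma commute_left_comm {a b : M} (h : Commute a b) (c : M) :
    a * (b * c) = b * (a * c) := by rw [← mul_assoc, h.eq, mul_assoc]

lemma shuffle0 {a b c d : M} (h : Commute b c) :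
    a * b * (c * d) = a * (c * (b * d)) := by
  simp only [mul_assoc]; rw [commute_left_comm h]

lemma shuffle1 {a b c d f : M} (h1 : Commute b c) (h2 : Commute b d) :
    a * b * c * (d * f) = a * (c * (d * (b * f))) := by
  simp only [mul_assoc]; rw [commute_left_comm h1, commute_left_comm h2]

lemma shuffle2 {a b c d f : M} (h1 : Commute c d) (h2 : Commute b d) :
    a * b * c * (d * f) = a * (d * (b * (c * f))) := by
  simp only [mul_assoc]; rw [commute_left_comm h1, commute_left_comm h2]

lemma ordProd_congr (f g : ℕ → M) (m : ℕ) (h : ∀ k, 1 ≤ k → k ≤ m → f k = g k) :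
    ordProd f 1 m = ordProd g 1 m := by
  rw [ordProd_one_eq, ordProd_one_eq]
  congr 1
  refine List.map_congr_left fun k hk => ?_
  rw [List.mem_range'_1] at hk
  exact h k hk.1 (by omega)

end Shuffle


lemma span_eval {T : Type*} [Ring T] [Algebra ℂ T] (Phi : T →ₗ[ℂ] ℂ) (N : Set T)
    (hN : Submodule.span ℂ N = ⊤) (g : T)
    (h : ∀ a ∈ N, ∀ b ∈ N, Phi (a * g * b) = 0) : ∀ a b : T, Phi (a * g * b) = 0 := by
  have step1 : ∀ a ∈ N, ∀ b : T, Phi (a * g * b) = 0 := by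
    intro a ha b
    have hb : b ∈ Submodule.span ℂ N := by rw [hN]; trivial
    induction hb using Submodule.span_induction with
    | mem z hz => exact h a ha z hz
    | zero => rw [mul_zero, map_zero]
    | add u v _ _ hu hv => rw [mul_add, map_add, hu, hv, add_zero]
    | smul c u _ hu => rw [mul_smul_comm, map_smul, hu, smul_zero]
  intro a b
  have ha : a ∈ Submodule.span ℂ N := by rw [hN]; trivial
  induction ha using Submodule.span_induction with
  | mem z hz => exact step1 z hz b
  | zero => rw [zero_mul, zero_mul, map_zero]
  | add u v _ _ hu hv => rw [add_mul, add_mul, map_add, hu, hv, add_zero]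
  | smul c u _ hu => rw [smul_mul_assoc, smul_mul_assoc, map_smul, hu, smul_zero]

lemma fin2_cases (j : Fin 2) : j = 0 ∨ j = 1 := by revert j; decide

theorem kernel_contains_ideal
    {A B : Fin 2 → Type*} {T : Type*}
    [∀ i, Ring (A i)] [∀ i, Algebra ℂ (A i)] [∀ i, StarRing (A i)] [∀ i, StarModule ℂ (A i)]
    [∀ i, Ring (B i)] [∀ i, Algebra ℂ (B i)] [∀ i, StarRing (B i)] [∀ i, StarModule ℂ (B i)]
    [Ring T] [Algebra ℂ T] [StarRing T] [StarModule ℂ T]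
    (G : ∀ i, Set (A i)) (hG : ∀ i, ∀ x ∈ G i, star x ∈ G i)
    (hA : ∀ i, Algebra.adjoin ℂ (G i) = ⊤)
    (ι : ∀ i, A i →⋆ₐ[ℂ] B i) (t : ∀ i, B i) (ht : ∀ i, star (t i) = t i)
    (hB : ∀ i, Algebra.adjoin ℂ (Set.range (ι i) ∪ {t i}) = ⊤)
    (m : ℕ) (hm : 1 ≤ m)
    (e : ∀ i, ℕ → B i →⋆ₐ[ℂ] T)
    (hcomm : ∀ (i i' : Fin 2) (k k' : ℕ), (i, k) ≠ (i', k') →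
      ∀ (x : B i) (y : B i'), Commute (e i k x) (e i' k' y))
    (hT : Algebra.adjoin ℂ
      {x : T | ∃ (i : Fin 2) (k : ℕ), 1 ≤ k ∧ k ≤ m ∧ ∃ b : B i, x = e i k b} = ⊤)
    -- the pairs of states `(φᵢ, ψᵢ)` on `A i` and their Boolean extensions `φt i`, `ψt i`
    (φ ψ : ∀ i, A i →ₗ[ℂ] ℂ) (hφ : ∀ i, IsState (φ i)) (hψ : ∀ i, IsState (ψ i))
    (φt ψt : ∀ i, B i →ₗ[ℂ] ℂ)
    (hφt : ∀ i, IsBooleanExt (G i) (⇑(ι i)) (t i) (φ i) (φt i))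
    (hψt : ∀ i, IsBooleanExt (G i) (⇑(ι i)) (t i) (ψ i) (ψt i))
    -- the tensor product state `Φ̃^{(m)} = φ̃₁ ⊗ ψ̃₁^{⊗(m-1)} ⊗ φ̃₂ ⊗ ψ̃₂^{⊗(m-1)}`
    (Φ : T →ₗ[ℂ] ℂ)
    (hΦ : ∀ (x : ℕ → B 0) (y : ℕ → B 1),
      Φ (ordProd (fun k => e 0 k (x k)) 1 m * ordProd (fun k => e 1 k (y k)) 1 m) =
        ordProd (fun k => if k = 1 then φt 0 (x k) else ψt 0 (x k)) 1 m *
          ordProd (fun k => if k = 1 then φt 1 (y k) else ψt 1 (y k)) 1 m)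
    -- the two-sided *-ideal `L^{(m)}` generated by the elements `i_{k,2m}(t(1-t))`
    (L : TwoSidedIdeal T)
    (hL : L = TwoSidedIdeal.span
      {x : T | ∃ (i : Fin 2) (k : ℕ), 1 ≤ k ∧ k ≤ m ∧ x = e i k (t i * (1 - t i))}) :
    -- `L^{(m)} ⊆ ker Φ̃^{(m)}`
    ∀ x ∈ L, Φ x = 0 := by
    classical
  -- commutation helpers
  have c00 : ∀ (k k2 : ℕ), k ≠ k2 → ∀ (u v : B 0), Commute (e 0 k u) (e 0 k2 v) :=
    fun k k2 hk u v => hcomm 0 0 k k2 (fun h => hk (congrArg Prod.snd h)) u v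
  have c11 : ∀ (k k2 : ℕ), k ≠ k2 → ∀ (u v : B 1), Commute (e 1 k u) (e 1 k2 v) :=
    fun k k2 hk u v => hcomm 1 1 k k2 (fun h => hk (congrArg Prod.snd h)) u v
  have c01 : ∀ (k k2 : ℕ) (u : B 0) (v : B 1), Commute (e 0 k u) (e 1 k2 v) :=
    fun k k2 u v => hcomm 0 1 k k2 (fun h => by simp [Prod.ext_iff] at h) u v
  have cE1 : ∀ (u : B 0) (k : ℕ) (y : ℕ → B 1),
      Commute (e 0 k u) (ordProd (fun k2 => e 1 k2 (y k2)) 1 m) :=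
    fun u k y => commute_ordProd _ _ _ fun k2 _ _ => c01 k k2 u (y k2)
  have cE0 : ∀ (v : B 1) (k : ℕ) (x : ℕ → B 0),
      Commute (e 1 k v) (ordProd (fun k2 => e 0 k2 (x k2)) 1 m) :=
    fun v k x => commute_ordProd _ _ _ fun k2 _ _ => (c01 k2 k (x k2) v).symm
  have cYX : ∀ (y : ℕ → B 1) (x : ℕ → B 0),
      Commute (ordProd (fun k => e 1 k (y k)) 1 m) (ordProd (fun k => e 0 k (x k)) 1 m) :=
    fun y x => commute_ordProd _ _ _ fun k _ _ => (cE1 (x k) k y).symm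
  have merge0 : ∀ x x' : ℕ → B 0,
      ordProd (fun k => e 0 k (x k)) 1 m * ordProd (fun k => e 0 k (x' k)) 1 m =
        ordProd (fun k => e 0 k (x k * x' k)) 1 m := by
    intro x x'
    rw [ordProd_mul_ordProd _ _ m (fun k k2 _ _ _ _ hne => c00 k k2 hne _ _)]
    exact ordProd_congr _ _ m fun k _ _ => (map_mul (e 0 k) _ _).symm
  have merge1 : ∀ y y' : ℕ → B 1,
      ordProd (fun k => e 1 k (y k)) 1 m * ordProd (fun k => e 1 k (y' k)) 1 m =
        ordProd (fun k => e 1 k (y k * y' k)) 1 m := by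
    intro y y'
    rw [ordProd_mul_ordProd _ _ m (fun k k2 _ _ _ _ hne => c11 k k2 hne _ _)]
    exact ordProd_congr _ _ m fun k _ _ => (map_mul (e 1 k) _ _).symm
  have hones0 : ordProd (fun k => e (0 : Fin 2) k (1 : B 0)) 1 m = 1 :=
    ordProd_eq_one _ m fun k _ _ => map_one (e 0 k)
  have hones1 : ordProd (fun k => e (1 : Fin 2) k (1 : B 1)) 1 m = 1 :=
    ordProd_eq_one _ m fun k _ _ => map_one (e 1 k)
  -- the normal-form set spans T
  set NT : Set T := {z | ∃ (x : ℕ → B 0) (y : ℕ → B 1),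
    z = ordProd (fun k => e 0 k (x k)) 1 m * ordProd (fun k => e 1 k (y k)) 1 m} with hNTdef
  have hNT : ∀ z ∈ Submonoid.closure
      {x : T | ∃ (i : Fin 2) (k : ℕ), 1 ≤ k ∧ k ≤ m ∧ ∃ b : B i, x = e i k b}, z ∈ NT := by
    intro z hz
    induction hz using Submonoid.closure_induction with
    | one =>
      refine ⟨fun _ => 1, fun _ => 1, ?_⟩
      show (1 : T) = ordProd (fun k => e 0 k (1 : B 0)) 1 m *
        ordProd (fun k => e 1 k (1 : B 1)) 1 m
      rw [hones0, hones1, one_mul]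
    | mem w hw =>
      obtain ⟨j, k, hk1, hk2, b, rfl⟩ := hw
      rcases fin2_cases j with rfl | rfl
      · refine ⟨fun k2 => if k2 = k then b else 1, fun _ => 1, ?_⟩
        show e 0 k b = ordProd (fun k2 => e 0 k2 (if k2 = k then b else 1)) 1 m *
          ordProd (fun k2 => e 1 k2 (1 : B 1)) 1 m
        rw [hones1, mul_one,
          ordProd_single _ m k hk1 hk2 (fun j _ _ hjk => by rw [if_neg hjk, map_one]),
          if_pos rfl]
      · refine ⟨fun _ => 1, fun k2 => if k2 = k then b else 1, ?_⟩
        show e 1 k b = ordProd (fun k2 => e 0 k2 (1 : B 0)) 1 m *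
          ordProd (fun k2 => e 1 k2 (if k2 = k then b else 1)) 1 m
        rw [hones0, one_mul,
          ordProd_single _ m k hk1 hk2 (fun j _ _ hjk => by rw [if_neg hjk, map_one]),
          if_pos rfl]
    | mul za zb hza hzb iha ihb =>
      obtain ⟨x, y, rfl⟩ := iha
      obtain ⟨x', y', rfl⟩ := ihb
      refine ⟨fun k => x k * x' k, fun k => y k * y' k, ?_⟩
      show _ = ordProd (fun k => e 0 k (x k * x' k)) 1 m *
        ordProd (fun k => e 1 k (y k * y' k)) 1 m
      rw [shuffle0 (cYX y x'), ← mul_assoc, merge0, merge1]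
  have hNTspan : Submodule.span ℂ NT = ⊤ := by
    refine top_unique ?_
    have h1 : (⊤ : Submodule ℂ T) = Submodule.span ℂ ((Submonoid.closure
        {x : T | ∃ (i : Fin 2) (k : ℕ), 1 ≤ k ∧ k ≤ m ∧ ∃ b : B i, x = e i k b} :
          Submonoid T) : Set T) := by
      rw [← Algebra.top_toSubmodule, ← hT, Algebra.adjoin_eq_span]
    rw [h1]
    exact Submodule.span_le.mpr fun z hz => Submodule.subset_span (hNT z hz)
  -- the Boolean extensions kill t(1-t)
  have kill0φ : ∀ u v, (φt 0) (u * (t 0 * (1 - t 0)) * v) = 0 :=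
    boolext_kills (G 0) (ι 0).toAlgHom (t 0) (φ 0) (φt 0) (hA 0) (hB 0) (hφt 0)
  have kill0ψ : ∀ u v, (ψt 0) (u * (t 0 * (1 - t 0)) * v) = 0 :=
    boolext_kills (G 0) (ι 0).toAlgHom (t 0) (ψ 0) (ψt 0) (hA 0) (hB 0) (hψt 0)
  have kill1φ : ∀ u v, (φt 1) (u * (t 1 * (1 - t 1)) * v) = 0 :=
    boolext_kills (G 1) (ι 1).toAlgHom (t 1) (φ 1) (φt 1) (hA 1) (hB 1) (hφt 1)
  have kill1ψ : ∀ u v, (ψt 1) (u * (t 1 * (1 - t 1)) * v) = 0 :=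
    boolext_kills (G 1) (ι 1).toAlgHom (t 1) (ψ 1) (ψt 1) (hA 1) (hB 1) (hψt 1)
  -- the main vanishing statement
  have main : ∀ (i : Fin 2) (kk : ℕ), 1 ≤ kk → kk ≤ m →
      ∀ a b : T, Φ (a * e i kk (t i * (1 - t i)) * b) = 0 := by
    intro i kk hk1 hk2
    rcases fin2_cases i with rfl | rfl
    · refine span_eval Φ NT hNTspan _ ?_
      rintro a ⟨x₀, y₀, rfl⟩ b ⟨x₁, y₁, rfl⟩
      have hg : e 0 kk (t 0 * (1 - t 0)) =
          ordProd (fun k => e 0 k (if k = kk then t 0 * (1 - t 0) else 1)) 1 m := by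
        rw [ordProd_single _ m kk hk1 hk2 (fun j _ _ hjk => by rw [if_neg hjk, map_one]),
          if_pos rfl]
      rw [hg, shuffle1 (cYX y₀ _) (cYX y₀ x₁), ← mul_assoc, ← mul_assoc,
        merge0, merge0, merge1, hΦ]
      refine mul_eq_zero_of_left (ordProd_zero_of (k := kk) _ hk1 hk2 ?_) _
      show (if kk = 1 then
          φt 0 (x₀ kk * (if kk = kk then t 0 * (1 - t 0) else 1) * x₁ kk)
        else ψt 0 (x₀ kk * (if kk = kk then t 0 * (1 - t 0) else 1) * x₁ kk)) = 0
      rw [if_pos rfl]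
      by_cases h1 : kk = 1
      · rw [if_pos h1]; exact kill0φ _ _
      · rw [if_neg h1]; exact kill0ψ _ _
    · refine span_eval Φ NT hNTspan _ ?_
      rintro a ⟨x₀, y₀, rfl⟩ b ⟨x₁, y₁, rfl⟩
      have hg : e 1 kk (t 1 * (1 - t 1)) =
          ordProd (fun k => e 1 k (if k = kk then t 1 * (1 - t 1) else 1)) 1 m := by
        rw [ordProd_single _ m kk hk1 hk2 (fun j _ _ hjk => by rw [if_neg hjk, map_one]),
          if_pos rfl]
      rw [hg, shuffle2 (cYX _ x₁) (cYX y₀ x₁), merge1, merge1, ← mul_assoc, merge0, hΦ]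
      refine mul_eq_zero_of_right _ (ordProd_zero_of (k := kk) _ hk1 hk2 ?_)
      show (if kk = 1 then
          φt 1 (y₀ kk * ((if kk = kk then t 1 * (1 - t 1) else 1) * y₁ kk))
        else ψt 1 (y₀ kk * ((if kk = kk then t 1 * (1 - t 1) else 1) * y₁ kk))) = 0
      rw [if_pos rfl]
      by_cases h1 : kk = 1
      · rw [if_pos h1, ← mul_assoc]; exact kill1φ _ _
      · rw [if_neg h1, ← mul_assoc]; exact kill1ψ _ _
  -- conclude via the ideal of elements killed under multiplication
  subst hL
  intro x hx
  let K : TwoSidedIdeal T := TwoSidedIdeal.mk' {x : T | ∀ a b : T, Φ (a * x * b) = 0}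
    (fun a b => by rw [mul_zero, zero_mul, map_zero])
    (fun {u v} hu hv a b => by rw [mul_add, add_mul, map_add, hu a b, hv a b, add_zero])
    (fun {u} hu a b => by rw [mul_neg, neg_mul, map_neg, hu a b, neg_zero])
    (fun {u v} hv a b => by rw [← mul_assoc a u v]; exact hv (a * u) b)
    (fun {u v} hu a b => by rw [← mul_assoc a u v, mul_assoc (a * u) v b]; exact hu a (v * b))
  have hxK : x ∈ K := by
    refine TwoSidedIdeal.mem_span_iff.mp hx K ?_
    rintro z ⟨i, k, hk1, hk2, rfl⟩
    exact (TwoSidedIdeal.mem_mk' _ _ _ _ _ _ _).mpr (main i k hk1 hk2)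
  have := (TwoSidedIdeal.mem_mk' _ _ _ _ _ _ x).mp hxK 1 1
  rwa [one_mul, mul_one] at this
end
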